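/- arXiv:1201.4317 — 10 statements merged into one kernel-verified Lean document; each statement's English description precedes it below -/
import Mathlib

section
/- For any poset (X, ≤), each equivalence class of the partially commutative monoid L(X, ≤) (the quotient of the free monoid X* by the congruence allowing adjacent comparable distinct letters to be swapped) contains exactly one minimal word, i.e., exactly one word with empty descent set. -/
/-!
Insertion sort, where an inserted letter `a` moves right past a letter `y` exactly when `y < a`,
realises every word as equivalent to a word without descents. The result is invariant
under swapping two distinct comparable adjacent letters, because inserting two comparable letters
into a word commutes; hence equivalent words sort to the same word. A word without descents is
left unchanged by the sort, so it is the sorted form of everything in its class.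
-/

/-- Adjacency in the free monoid over a poset: swap of two adjacent,
distinct and comparable letters. -/
inductive PCM.Adj {X : Type*} [PartialOrder X] : List X → List X → Prop
  | swap (u v : List X) (a b : X) (hne : a ≠ b) (hcomp : a ≤ b ∨ b ≤ a) :
      PCM.Adj (u ++ a :: b :: v) (u ++ b :: a :: v)

/-- Equivalence in the partially commutative monoid `L(X, ≤)`. -/
def PCM.Equiv {X : Type*} [PartialOrder X] (w w' : List X) : Prop :=
  Relation.ReflTransGen PCM.Adj w w'

/-- The descent set of a word `w = x₁ x₂ ⋯ xₙ` : the set of `i`,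
`1 ≤ i ≤ n-1`, with `x_i > x_{i+1}` (0-based: `w[i-1] > w[i]`). -/
def PCM.DES {X : Type*} [PartialOrder X] (w : List X) : Set ℕ :=
  {i | ∃ h : i < w.length, 0 < i ∧ w[i]'h < w[i - 1]'(by omega)}

theorem List.IsChain.orderedInsert {α : Type*} {r : α → α → Prop} [DecidableRel r]
    (hr : ∀ a b, ¬ r a b → r b a) (a : α) {l : List α} (hl : l.IsChain r) :
    (l.orderedInsert r a).IsChain r := by
  induction l with
  | nil => simp
  | cons b t ih =>
    rw [List.isChain_cons] at hl
    by_cases hab : r a b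
    · rw [List.orderedInsert_cons_of_le _ _ hab]
      exact List.isChain_cons_cons.2 ⟨hab, List.isChain_cons.2 hl⟩
    · rw [List.orderedInsert_of_not_le _ _ hab]
      refine List.isChain_cons.2 ⟨?_, ih hl.2⟩
      cases t with
      | nil => simpa using hr a b hab
      | cons c t =>
        by_cases hac : r a c
        · simpa [hac] using hr a b hab
        · simpa [hac] using hl.1

-- Unlike `List.pairwise_insertionSort`, this needs no transitivity: `fun x y => ¬ y < x` has none.
theorem List.isChain_insertionSort {α : Type*} {r : α → α → Prop} [DecidableRel r]
    (hr : ∀ a b, ¬ r a b → r b a) (l : List α) : (l.insertionSort r).IsChain r := by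
  induction l with
  | nil => simp
  | cons a t ih => exact ih.orderedInsert hr a

theorem List.IsChain.insertionSort_eq {α : Type*} {r : α → α → Prop} [DecidableRel r]
    {l : List α} (hl : l.IsChain r) : l.insertionSort r = l := by
  induction l with
  | nil => rfl
  | cons a t ih =>
    rw [List.isChain_cons] at hl
    rw [List.insertionSort_cons, ih hl.2]
    cases t with
    | nil => rfl
    | cons b t => exact List.orderedInsert_cons_of_le _ _ (hl.1 b rfl)

namespace PCM

variable {X : Type*} [PartialOrder X]

theorem Adj.cons (c : X) {w w' : List X} (h : Adj w w') : Adj (c :: w) (c :: w') := by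
  obtain ⟨u, v, a, b, hne, hcomp⟩ := h
  exact .swap (c :: u) v a b hne hcomp

theorem Equiv.cons (c : X) {w w' : List X} (h : PCM.Equiv w w') :
    PCM.Equiv (c :: w) (c :: w') :=
  Relation.ReflTransGen.lift (List.cons c) (fun _ _ => Adj.cons c) _ _ h

theorem des_eq_empty_iff {w : List X} : DES w = ∅ ↔ w.IsChain (fun x y => ¬ y < x) := by
  simp only [List.isChain_iff_getElem, Set.eq_empty_iff_forall_notMem, DES, Set.mem_ofPred_eq,
    not_exists, not_and]
  constructor
  · intro h i hi
    simpa using h (i + 1) hi i.succ_pos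
  · intro h i hi hpos
    obtain ⟨j, rfl⟩ := Nat.exists_add_one_eq.2 hpos
    simpa using h j hi

variable [DecidableLT X]

theorem equiv_orderedInsert (a : X) (l : List X) :
    PCM.Equiv (a :: l) (l.orderedInsert (fun x y => ¬ y < x) a) := by
  induction l with
  | nil => exact .refl
  | cons y t ih =>
    by_cases hya : y < a
    · rw [List.orderedInsert_of_not_le _ _ (not_not.2 hya)]
      exact .head (.swap [] t a y hya.ne' (.inr hya.le)) (ih.cons y)
    · rw [List.orderedInsert_cons_of_le _ _ hya]
      exact .refl

theorem equiv_insertionSort (w : List X) :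
    PCM.Equiv w (w.insertionSort (fun x y => ¬ y < x)) := by
  induction w with
  | nil => exact .refl
  | cons a t ih => exact (ih.cons a).trans (equiv_orderedInsert a _)

theorem orderedInsert_comm_of_lt {a b : X} (hab : a < b) (l : List X) :
    (l.orderedInsert (fun x y => ¬ y < x) b).orderedInsert (fun x y => ¬ y < x) a =
      (l.orderedInsert (fun x y => ¬ y < x) a).orderedInsert (fun x y => ¬ y < x) b := by
  induction l with
  | nil => simp [hab, hab.not_gt]
  | cons y t ih =>
    by_cases hya : y < a
    · simp [hya, hya.trans hab, ih]
    · by_cases hyb : y < b <;> simp [hya, hyb, hab, hab.not_gt]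

theorem insertionSort_eq_of_adj {w w' : List X} (h : Adj w w') :
    w.insertionSort (fun x y => ¬ y < x) = w'.insertionSort (fun x y => ¬ y < x) := by
  obtain ⟨u, v, a, b, hne, hcomp⟩ := h
  induction u with
  | nil =>
    rcases hcomp with hab | hba
    · exact orderedInsert_comm_of_lt (hab.lt_of_ne hne) _
    · exact (orderedInsert_comm_of_lt (hba.lt_of_ne hne.symm) _).symm
  | cons c u ih => simp [ih]

theorem insertionSort_eq_of_equiv {w w' : List X} (h : PCM.Equiv w w') :
    w.insertionSort (fun x y => ¬ y < x) = w'.insertionSort (fun x y => ¬ y < x) := by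
  induction h with
  | refl => rfl
  | tail _ hadj ih => exact ih.trans (insertionSort_eq_of_adj hadj)

end PCM

/-- Each equivalence class of `L(X, ≤)` contains exactly one minimal word. -/
theorem stmt_0 {X : Type*} [PartialOrder X] (w : List X) :
    ∃! w' : List X, PCM.Equiv w w' ∧ PCM.DES w' = ∅ := by
  classical
  have h_total : ∀ a b : X, ¬ ¬ b < a → ¬ a < b := fun a b h => (not_not.1 h).asymm
  refine ⟨w.insertionSort (fun x y => ¬ y < x), ⟨PCM.equiv_insertionSort w,
    PCM.des_eq_empty_iff.2 (List.isChain_insertionSort h_total w)⟩, ?_⟩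
  rintro w' ⟨hequiv, hdes⟩
  rw [PCM.insertionSort_eq_of_equiv hequiv, (PCM.des_eq_empty_iff.1 hdes).insertionSort_eq]
end

section
/- For any poset (X, ≤), any word w in X*, and any finite set S of positive integers, the number of words w' equivalent to w (in the partially commutative monoid sense) with DES(w') = S equals the number of words w' equivalent to w with ASC(w') = S. -/
/-- Rise set: positions `i`, `1 ≤ i ≤ n-1`, with `x_i < x_{i+1}`. -/
def PCM.ASC {X : Type*} [PartialOrder X] (w : List X) : Set ℕ :=
  {i | ∃ h : i < w.length, 0 < i ∧ w[i - 1]'(by omega) < w[i]'h}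

open Relation Function

namespace Relation

variable {α : Type*} {r : α → α → Prop}

def IsNormal (r : α → α → Prop) (a : α) : Prop := ∀ b, ¬ r a b

theorem join_of_locallyConfluent (hwf : WellFounded (flip r))
    (hlc : ∀ a b c, r a b → r a c → Join (ReflTransGen r) b c) {a b c : α}
    (hab : ReflTransGen r a b) (hac : ReflTransGen r a c) : Join (ReflTransGen r) b c := by
  induction a using hwf.induction generalizing b c with
  | _ a IH =>
  rcases hab.cases_head with rfl | ⟨b₁, hab₁, hb₁b⟩
  · exact ⟨c, hac, .refl⟩
  rcases hac.cases_head with rfl | ⟨c₁, hac₁, hc₁c⟩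
  · exact ⟨b, .refl, hab⟩
  obtain ⟨d, hb₁d, hc₁d⟩ := hlc a b₁ c₁ hab₁ hac₁
  obtain ⟨e, hbe, hde⟩ := IH b₁ hab₁ hb₁b hb₁d
  obtain ⟨f, hcf, hef⟩ := IH c₁ hac₁ hc₁c (hc₁d.trans hde)
  exact ⟨f, hbe.trans hef, hcf⟩

theorem exists_reflTransGen_isNormal (hwf : WellFounded (flip r)) (a : α) :
    ∃ b, ReflTransGen r a b ∧ IsNormal r b := by
  induction a using hwf.induction with
  | _ a IH =>
  by_cases ha : IsNormal r a
  · exact ⟨a, .refl, ha⟩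
  · obtain ⟨b, hab⟩ := not_forall_not.mp ha
    obtain ⟨c, hbc, hc⟩ := IH b hab
    exact ⟨c, .head hab hbc, hc⟩

theorem IsNormal.eq_of_reflTransGen {a b : α} (ha : IsNormal r a) (h : ReflTransGen r a b) :
    a = b := by
  rcases h.cases_head with rfl | ⟨c, hac, _⟩
  · rfl
  · exact absurd hac (ha c)

theorem IsNormal.eq_of_eqvGen (hwf : WellFounded (flip r))
    (hlc : ∀ a b c, r a b → r a c → Join (ReflTransGen r) b c) {a b : α}
    (ha : IsNormal r a) (hb : IsNormal r b) (h : EqvGen r a b) : a = b := by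
  have hjoin : Equivalence (Join (ReflTransGen r)) :=
    equivalence_join fun _ _ _ => join_of_locallyConfluent hwf hlc
  obtain ⟨c, hac, hbc⟩ :=
    hjoin.eqvGen_iff.mp (EqvGen.mono (fun x y h => ⟨y, .single h, .refl⟩) _ _ h)
  rw [ha.eq_of_reflTransGen hac, hb.eq_of_reflTransGen hbc]

theorem ncard_isNormal_eq {ρ₁ ρ₂ : α → α → Prop}
    (hwf₁ : WellFounded (flip ρ₁)) (hwf₂ : WellFounded (flip ρ₂))
    (hlc₁ : ∀ a b c, ρ₁ a b → ρ₁ a c → Join (ReflTransGen ρ₁) b c)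
    (hlc₂ : ∀ a b c, ρ₂ a b → ρ₂ a c → Join (ReflTransGen ρ₂) b c)
    (heqv : EqvGen ρ₁ = EqvGen ρ₂) {s : Set α}
    (hs : ∀ a b, a ∈ s → EqvGen ρ₁ a b → b ∈ s) :
    {a ∈ s | IsNormal ρ₁ a}.ncard = {a ∈ s | IsNormal ρ₂ a}.ncard := by
  choose nf hnf hnf_normal using exists_reflTransGen_isNormal hwf₂
  have hnf_eqv : ∀ a, EqvGen ρ₁ a (nf a) := fun a =>
    heqv ▸ EqvGen.reflTransGen_le_eqvGen _ _ _ (hnf a)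
  refine Set.ncard_congr (fun a _ => nf a)
    (fun a ha => ⟨hs _ _ ha.1 (hnf_eqv a), hnf_normal a⟩) ?_ ?_
  · intro a b ha hb hab
    refine ha.2.eq_of_eqvGen hwf₁ hlc₁ hb.2 (.trans _ _ _ (hnf_eqv a) ?_)
    exact hab ▸ .symm _ _ (hnf_eqv b)
  · intro b hb
    obtain ⟨a, hba, ha⟩ := exists_reflTransGen_isNormal hwf₁ b
    have hab : EqvGen ρ₁ a b := .symm _ _ (EqvGen.reflTransGen_le_eqvGen _ _ _ hba)
    refine ⟨a, ⟨hs _ _ hb.1 (.symm _ _ hab), ha⟩, ?_⟩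
    refine (hnf_normal a).eq_of_eqvGen hwf₂ hlc₂ hb.2 ?_
    exact heqv ▸ .trans _ _ _ (.symm _ _ (hnf_eqv a)) hab

end Relation

namespace Finset

theorem eq_of_sum_powerset_eq {β M : Type*} [AddCancelCommMonoid M] {f g : Finset β → M}
    (h : ∀ T : Finset β, ∑ T' ∈ T.powerset, f T' = ∑ T' ∈ T.powerset, g T') : f = g := by
  classical
  funext T
  induction T using Finset.strongInduction with
  | _ T IH =>
  have hsum := h T
  rw [← sum_erase_add _ _ (mem_powerset_self T), ← sum_erase_add _ _ (mem_powerset_self T),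
    sum_congr rfl fun T' hT' => IH T' ?_] at hsum
  · exact add_left_cancel hsum
  · rw [mem_erase, mem_powerset] at hT'
    exact ssubset_of_subset_of_ne hT'.2 hT'.1

end Finset

theorem Set.ncard_setOf_subset_eq_sum {α β : Type*} {p : α → Prop}
    (hp : {a | p a}.Finite) (F : α → Set β) (T : Finset β) :
    {a | p a ∧ F a ⊆ T}.ncard = ∑ T' ∈ T.powerset, {a | p a ∧ F a = T'}.ncard := by
  classical
  have hset : ∀ q : α → Prop, {a | p a ∧ q a} = ↑(hp.toFinset.filter q) := fun q => by
    ext a; simp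
  simp only [hset, Set.ncard_coe_finset]
  rw [Finset.card_eq_sum_card_fiberwise (f := fun a => T.filter (· ∈ F a)) (t := T.powerset)
    fun a _ => Finset.mem_powerset.mpr (Finset.filter_subset _ _)]
  refine Finset.sum_congr rfl fun T' hT' => congrArg Finset.card ?_
  ext a
  simp only [Finset.mem_filter, Finset.mem_powerset] at hT' ⊢
  constructor
  · rintro ⟨⟨ha, hFa⟩, rfl⟩
    refine ⟨ha, ?_⟩
    ext i
    simpa using fun h => hFa h
  · rintro ⟨ha, hFa⟩
    refine ⟨⟨ha, hFa ▸ Finset.coe_subset.mpr hT'⟩, ?_⟩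
    ext i
    simp only [Finset.mem_filter, hFa, Finset.mem_coe, and_iff_right_iff_imp]
    exact fun h => hT' h

namespace PCM

variable {X : Type*}

section DescentSwap

variable {r : X → X → Prop} {A : ℕ → Prop}

/-- `A i` allows exchanging the letters at 0-based positions `i - 1` and `i`, the convention of
`PCM.DES`. -/
inductive DescentSwap (r : X → X → Prop) (A : ℕ → Prop) : List X → List X → Prop
  | swap (u v : List X) (a b : X) (hr : r b a) (hA : A (u.length + 1)) :
      DescentSwap r A (u ++ a :: b :: v) (u ++ b :: a :: v)

open scoped Classical in
noncomputable def inversions (r : X → X → Prop) : List X → ℕ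
  | [] => 0
  | a :: l => l.countP (fun b => r b a) + inversions r l

theorem inversions_append_swap_lt [Std.Asymm r] (u v : List X) {a b : X} (h : r b a) :
    inversions r (u ++ b :: a :: v) < inversions r (u ++ a :: b :: v) := by
  induction u with
  | nil =>
    simp only [List.nil_append, inversions, List.countP_cons, h, asymm h, decide_true,
      decide_false, if_true, Bool.false_eq_true, if_false]
    omega
  | cons c u ih =>
    simp only [List.cons_append, inversions]
    rw [((List.Perm.swap a b v).append_left u).countP_eq]
    omega

theorem wellFounded_flip_descentSwap [Std.Asymm r] (A : ℕ → Prop) :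
    WellFounded (flip (DescentSwap r A)) :=
  Subrelation.wf (fun {_ _} h => by
    rcases h with ⟨u, v, a, b, hr, -⟩
    exact inversions_append_swap_lt u v hr) (measure (inversions r)).wf

theorem descentSwap_swap_iff {l l' : List X} :
    DescentSwap (swap r) A l l' ↔ DescentSwap r A l' l := by
  constructor <;> rintro ⟨u, v, a, b, hr, hA⟩ <;> exact .swap u v b a hr hA

theorem eqvGen_descentSwap_swap :
    EqvGen (DescentSwap (swap r) A) = EqvGen (DescentSwap r A) :=
  le_antisymm (EqvGen.eqvGen_le fun _ _ h => .symm _ _ (.rel _ _ (descentSwap_swap_iff.mp h)))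
    (EqvGen.eqvGen_le fun _ _ h => .symm _ _ (.rel _ _ (descentSwap_swap_iff.mpr h)))

theorem join_descentSwap_of_overlap [IsTrans X r] (u v : List X) {a b c : X}
    (hba : r b a) (hcb : r c b) (hA₁ : A (u.length + 1)) (hA₂ : A (u.length + 2)) :
    Join (ReflTransGen (DescentSwap r A))
      (u ++ b :: a :: c :: v) (u ++ a :: c :: b :: v) := by
  have hca := trans_of r hcb hba
  have second : ∀ {x y z}, r z y →
      DescentSwap r A (u ++ x :: y :: z :: v) (u ++ x :: z :: y :: v) := fun {x y z} h => by
    simpa using DescentSwap.swap (u ++ [x]) v y z h (by simpa using hA₂)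
  exact ⟨u ++ c :: b :: a :: v, .head (second hca) (.single (.swap u _ b c hcb hA₁)),
    .head (.swap u _ a c hca hA₁) (.single (second hba))⟩

theorem join_descentSwap_of_disjoint (u m v : List X) {a b c d : X} (hba : r b a) (hdc : r d c)
    (hA₁ : A (u.length + 1)) (hA₂ : A ((u ++ a :: b :: m).length + 1)) :
    Join (ReflTransGen (DescentSwap r A))
      (u ++ b :: a :: m ++ c :: d :: v) (u ++ a :: b :: m ++ d :: c :: v) := by
  refine ⟨u ++ b :: a :: m ++ d :: c :: v,
    .single (.swap _ v c d hdc (by simpa using hA₂)), ?_⟩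
  simpa using ReflTransGen.single (DescentSwap.swap u (m ++ d :: c :: v) a b hba hA₁)

theorem join_descentSwap_of_length_le [IsTrans X r] {u₁ v₁ u₂ v₂ : List X}
    {a₁ b₁ a₂ b₂ : X} (heq : u₁ ++ a₁ :: b₁ :: v₁ = u₂ ++ a₂ :: b₂ :: v₂)
    (hle : u₁.length ≤ u₂.length) (h₁ : r b₁ a₁) (h₂ : r b₂ a₂)
    (hA₁ : A (u₁.length + 1)) (hA₂ : A (u₂.length + 1)) :
    Join (ReflTransGen (DescentSwap r A))
      (u₁ ++ b₁ :: a₁ :: v₁) (u₂ ++ b₂ :: a₂ :: v₂) := by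
  obtain ⟨m, rfl⟩ := List.prefix_of_prefix_length_le ⟨_, rfl⟩ ⟨_, heq.symm⟩ hle
  have hm : a₁ :: b₁ :: v₁ = m ++ a₂ :: b₂ :: v₂ :=
    List.append_cancel_left (heq.trans (List.append_assoc _ _ _))
  match m, hm with
  | [], hm =>
    obtain ⟨rfl, rfl, rfl⟩ : a₁ = a₂ ∧ b₁ = b₂ ∧ v₁ = v₂ := by simpa using hm
    exact ⟨_, .refl, by rw [List.append_nil]⟩
  | [_], hm =>
    obtain ⟨rfl, rfl, rfl⟩ : _ ∧ b₁ = a₂ ∧ v₁ = b₂ :: v₂ := by simpa using hm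
    simpa using join_descentSwap_of_overlap u₁ v₂ h₁ h₂ hA₁ (by simpa using hA₂)
  | _ :: _ :: m, hm =>
    obtain ⟨rfl, rfl, rfl⟩ : _ ∧ _ ∧ v₁ = m ++ a₂ :: b₂ :: v₂ := by simpa using hm
    simpa using join_descentSwap_of_disjoint u₁ m v₂ h₁ h₂ hA₁ (by simpa using hA₂)

theorem DescentSwap.join [IsTrans X r] {l l₁ l₂ : List X}
    (h₁ : DescentSwap r A l l₁) (h₂ : DescentSwap r A l l₂) :
    Join (ReflTransGen (DescentSwap r A)) l₁ l₂ := by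
  rcases h₁ with ⟨u₁, v₁, a₁, b₁, hr₁, hA₁⟩
  generalize hl : u₁ ++ a₁ :: b₁ :: v₁ = l at h₂
  rcases h₂ with ⟨u₂, v₂, a₂, b₂, hr₂, hA₂⟩
  rcases le_total u₁.length u₂.length with hle | hle
  · exact join_descentSwap_of_length_le hl hle hr₁ hr₂ hA₁ hA₂
  · exact _root_.symm (join_descentSwap_of_length_le hl.symm hle hr₂ hr₁ hA₂ hA₁)

theorem isNormal_descentSwap_iff {l : List X} :
    IsNormal (DescentSwap r A) l ↔
      ∀ (j : ℕ) (h : j + 1 < l.length), A (j + 1) → ¬ r l[j + 1] l[j] := by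
  constructor
  · intro hn j h hA hr
    have hl : l = l.take j ++ l[j] :: l[j + 1] :: l.drop (j + 1 + 1) := by
      rw [List.getElem_cons_drop, List.getElem_cons_drop, List.take_append_drop]
    have hswap := DescentSwap.swap (A := A) (l.take j) (l.drop (j + 1 + 1)) l[j] l[j + 1] hr
      (by rwa [List.length_take, min_eq_left (by omega)])
    rw [← hl] at hswap
    exact hn _ hswap
  · rintro hp l' ⟨u, v, a, b, hr, hA⟩
    exact hp u.length (by simp) hA (by simpa using hr)

theorem subset_iff_isNormal_descentSwap {l : List X} {T : Set ℕ} :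
    {i | ∃ h : i < l.length, 0 < i ∧ r l[i] (l[i - 1]'(by omega))} ⊆ T ↔
      IsNormal (DescentSwap r (· ∉ T)) l := by
  rw [isNormal_descentSwap_iff]
  constructor
  · exact fun hsub j h hj hr => hj (hsub ⟨h, j.succ_pos, hr⟩)
  · rintro hn i ⟨h, hi, hr⟩
    by_contra hiT
    obtain ⟨j, rfl⟩ := Nat.exists_eq_add_one_of_ne_zero hi.ne'
    exact hn j h hiT hr

end DescentSwap

variable [PartialOrder X]

instance : Std.Symm (Adj (X := X)) :=
  ⟨by rintro _ _ ⟨u, v, a, b, hne, hcomp⟩; exact .swap u v b a hne.symm hcomp.symm⟩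

theorem DescentSwap.adj {A : ℕ → Prop} {l l' : List X} (h : DescentSwap (· < ·) A l l') :
    Adj l l' := by
  rcases h with ⟨u, v, a, b, hr, -⟩
  exact .swap u v a b hr.ne' (Or.inr hr.le)

theorem equiv_of_eqvGen_descentSwap {A : ℕ → Prop} {l l' : List X}
    (h : EqvGen (DescentSwap (· < ·) A) l l') : Equiv l l' := by
  rw [Equiv, ← EqvGen.eqvGen_eq_reflTransGen]
  exact EqvGen.mono (fun _ _ => DescentSwap.adj) _ _ h

theorem Equiv.perm {w w' : List X} (h : Equiv w w') : w.Perm w' := by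
  induction h with
  | refl => rfl
  | tail _ hadj ih =>
    rcases hadj with ⟨u, v, a, b, -, -⟩
    exact ih.trans ((List.Perm.swap b a v).append_left u)

theorem setOf_equiv_finite (w : List X) : {w' | Equiv w w'}.Finite :=
  w.permutations.finite_toSet.subset fun _ hw' =>
    List.mem_permutations.mpr (Equiv.perm hw').symm

theorem des_subset_iff {l : List X} {T : Set ℕ} :
    DES l ⊆ T ↔ IsNormal (DescentSwap (· < ·) (· ∉ T)) l :=
  subset_iff_isNormal_descentSwap

theorem asc_subset_iff {l : List X} {T : Set ℕ} :
    ASC l ⊆ T ↔ IsNormal (DescentSwap (swap (· < ·)) (· ∉ T)) l :=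
  subset_iff_isNormal_descentSwap (r := swap (· < ·))

theorem ncard_des_subset_eq_ncard_asc_subset (w : List X) (T : Set ℕ) :
    {w' | Equiv w w' ∧ DES w' ⊆ T}.ncard = {w' | Equiv w w' ∧ ASC w' ⊆ T}.ncard := by
  simp_rw [des_subset_iff, asc_subset_iff]
  exact ncard_isNormal_eq (s := {w' | Equiv w w'})
    (wellFounded_flip_descentSwap _) (wellFounded_flip_descentSwap _)
    (fun _ _ _ => DescentSwap.join) (fun _ _ _ => DescentSwap.join)
    eqvGen_descentSwap_swap.symm
    fun _ _ hw h => hw.trans (equiv_of_eqvGen_descentSwap h)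

end PCM

theorem stmt_2_general {X : Type*} [PartialOrder X] (w : List X) (S : Finset ℕ) :
    {w' : List X | PCM.Equiv w w' ∧ PCM.DES w' = ↑S}.ncard
      = {w' : List X | PCM.Equiv w w' ∧ PCM.ASC w' = ↑S}.ncard := by
  have hfin := PCM.setOf_equiv_finite w
  refine congrFun (Finset.eq_of_sum_powerset_eq
    (f := fun T : Finset ℕ => {w' | PCM.Equiv w w' ∧ PCM.DES w' = ↑T}.ncard)
    (g := fun T : Finset ℕ => {w' | PCM.Equiv w w' ∧ PCM.ASC w' = ↑T}.ncard) fun T => ?_) S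
  rw [← Set.ncard_setOf_subset_eq_sum hfin, ← Set.ncard_setOf_subset_eq_sum hfin]
  exact PCM.ncard_des_subset_eq_ncard_asc_subset w T

/-- The set-valued statistics `DES` and `ASC` are equidistributed over each
equivalence class of `L(X, ≤)`. -/
theorem stmt_2 {X : Type*} [PartialOrder X] (w : List X) (S : Finset ℕ)
    (hS : ∀ i ∈ S, 0 < i) :
    {w' : List X | PCM.Equiv w w' ∧ PCM.DES w' = ↑S}.ncard
      = {w' : List X | PCM.Equiv w w' ∧ PCM.ASC w' = ↑S}.ncard :=
  stmt_2_general w S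
end

section
/- Let B be the set of nonempty finite subsets of positive integers, partially ordered by D ≪ D' iff D = D' or every element of D is smaller than every element of D'. If π and π' are words over B that are equivalent in the partially commutative monoid L(B, ≪), then for any piecewise decreasing and connected dashed pattern p, the number of occurrences of p in π equals the number of occurrences of p in π'. -/
namespace PCW

/-- `sb u v` : every letter of `u` is (strictly) below every letter of `v`.
Thus `u ≪ v` iff `u = v ∨ sb u v`. -/
def sb (u v : List ℕ) : Prop := ∀ x ∈ u, ∀ y ∈ v, x < y

/-- A block of a word over `B`: a nonempty strictly decreasing sequence of
positive integers. -/
def IsBlock (D : List ℕ) : Prop := D ≠ [] ∧ D.Pairwise (· > ·) ∧ ∀ x ∈ D, 0 < x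

/-- Adjacency in the free monoid over `(B, ≪)` : swap of two adjacent,
distinct and comparable blocks. -/
inductive Adj : List (List ℕ) → List (List ℕ) → Prop
  | swap (u v : List (List ℕ)) (a b : List ℕ) (hne : a ≠ b)
      (hcomp : sb a b ∨ sb b a) :
      Adj (u ++ a :: b :: v) (u ++ b :: a :: v)

/-- Equivalence in the partially commutative monoid `L(B, ≪)`. -/
def Equiv (π π' : List (List ℕ)) : Prop := Relation.ReflTransGen Adj π π'

/-- Two lists of naturals are order isomorphic: same length and `<`
holds in corresponding positions simultaneously. -/
def OrdIso (u v : List ℕ) : Prop :=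
  ∃ h : u.length = v.length, ∀ (a b : ℕ) (ha : a < u.length) (hb : b < u.length),
    (u[a]'ha < u[b]'hb ↔ v[a]'(by omega) < v[b]'(by omega))

/-- Occurrences of a (piecewise decreasing) dashed pattern `p`, given as its
list of blocks, in a word `π` over `B`: a strictly increasing choice of blocks
of `π` together with starting positions of contiguous subsequences, whose
concatenation is order isomorphic to the concatenation of the blocks of `p`. -/
def blockOccs (p π : List (List ℕ)) :
    Set ((Fin p.length → Fin π.length) × (Fin p.length → ℕ)) :=
  {o | StrictMono o.1
    ∧ (∀ i : Fin p.length, o.2 i + (p.get i).length ≤ (π.get (o.1 i)).length)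
    ∧ OrdIso
        (List.ofFn fun i : Fin p.length =>
          ((π.get (o.1 i)).drop (o.2 i)).take (p.get i).length).flatten
        p.flatten}

/-- The number of occurrences of the pattern `p` in the word `π` over `B`. -/
noncomputable def occ (p π : List (List ℕ)) : ℕ := (blockOccs p π).ncard

end PCW

/-!
Swapping two adjacent comparable blocks of `π` permutes block positions by the transposition of
`k` and `k + 1`. No occurrence of `p` uses both positions: the windows it reads in the two
blocks would be comparable, hence so would the two consecutive blocks of `p` placed there, which
connectedness forbids (for two equal blocks because they are nonempty). So composing occurrences
with the transposition keeps them increasing, and gives a bijection between the occurrences in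
the two words.
-/

theorem List.getElem?_flatten_length_take_add {α : Type*} (L : List (List α)) {i q : ℕ}
    (hi : i < L.length) (hq : q < L[i].length) :
    L.flatten[(L.take i).flatten.length + q]? = some L[i][q] := by
  have hsplit : L.flatten = (L.take i).flatten ++ (L[i] ++ (L.drop (i + 1)).flatten) := by
    rw [← List.flatten_cons, ← List.flatten_append, ← List.drop_eq_getElem_cons hi,
      List.take_append_drop]
  rw [hsplit, List.getElem?_append_right (Nat.le_add_right _ _), Nat.add_sub_cancel_left,
    List.getElem?_append_left hq, List.getElem?_eq_getElem hq]

theorem List.getElem?_swap_append_cons_cons {α : Type*} (u v : List α) (a b : α) (n : ℕ) :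
    (u ++ b :: a :: v)[Equiv.swap u.length (u.length + 1) n]? = (u ++ a :: b :: v)[n]? := by
  rcases lt_or_ge n u.length with hn | hn
  · rw [Equiv.swap_apply_of_ne_of_ne (by omega) (by omega), List.getElem?_append_left hn,
      List.getElem?_append_left hn]
  · obtain ⟨m, rfl⟩ := Nat.exists_eq_add_of_le hn
    rcases m with _ | _ | m
    · simp
    · simp
    · rw [Equiv.swap_apply_of_ne_of_ne (by omega) (by omega),
        List.getElem?_append_right hn, List.getElem?_append_right hn]
      simp

theorem StrictMono.swap_comp {α β : Type*} [Preorder α] [LinearOrder β] {f : α → β}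
    (hf : StrictMono f) {k k' : β} (hk : k ⋖ k') (h : ∀ a b, f a = k → f b ≠ k') :
    StrictMono (Equiv.swap k k' ∘ f) := by
  intro a b hab
  have hlt := hf hab
  have hkk := hk.lt
  simp only [Function.comp_apply, Equiv.swap_apply_def]
  split_ifs with ha hb hb' ha' hb hb' hb hb'
  · order
  · exact absurd hb' (h a b ha)
  · exact (hk.ge_of_gt (ha ▸ hlt)).lt_of_ne' hb'
  · exact hkk
  · order
  · exact hkk.trans (ha' ▸ hlt)
  · exact (hb ▸ hlt).trans hkk
  · exact (hk.le_of_lt (hb' ▸ hlt)).lt_of_ne ha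
  · exact hlt

namespace PCW

theorem sb.mono {u v u' v' : List ℕ} (h : sb u v) (hu : u' ⊆ u) (hv : v' ⊆ v) : sb u' v' :=
  fun x hx y hy => h x (hu hx) y (hv hy)

theorem not_sb_self {u : List ℕ} (hu : u ≠ []) : ¬ sb u u := by
  obtain ⟨x, hx⟩ := List.exists_mem_of_ne_nil u hu
  exact fun h => lt_irrefl x (h x hx x hx)

theorem OrdIso.lt_iff_lt {u v : List ℕ} (h : OrdIso u v) {a b x y x' y' : ℕ}
    (hx : u[a]? = some x) (hy : u[b]? = some y) (hx' : v[a]? = some x') (hy' : v[b]? = some y') :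
    x < y ↔ x' < y' := by
  obtain ⟨ha, rfl⟩ := List.getElem?_eq_some_iff.mp hx
  obtain ⟨hb, rfl⟩ := List.getElem?_eq_some_iff.mp hy
  obtain ⟨-, rfl⟩ := List.getElem?_eq_some_iff.mp hx'
  obtain ⟨-, rfl⟩ := List.getElem?_eq_some_iff.mp hy'
  exact h.2 a b ha hb

theorem OrdIso.sb_of_sb {p : List (List ℕ)} {w : Fin p.length → List ℕ}
    (hw : ∀ i, (w i).length = (p.get i).length) (hiso : OrdIso (List.ofFn w).flatten p.flatten)
    {i j : Fin p.length} (h : sb (w i) (w j)) : sb (p.get i) (p.get j) := by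
  have hoff : ∀ t : ℕ, ((List.ofFn w).take t).flatten.length = (p.take t).flatten.length := by
    intro t
    simp only [List.length_flatten, List.map_take]
    congr 2
    apply List.ext_getElem <;> simp [hw]
  intro x hx y hy
  obtain ⟨q, hq, rfl⟩ := List.getElem_of_mem hx
  obtain ⟨r, hr, rfl⟩ := List.getElem_of_mem hy
  have hwq : q < (w i).length := by simpa [hw] using hq
  have hwr : r < (w j).length := by simpa [hw] using hr
  refine (hiso.lt_iff_lt (a := (p.take i).flatten.length + q) (b := (p.take j).flatten.length + r)
    ?_ ?_ ?_ ?_).mp (h _ (List.getElem_mem hwq) _ (List.getElem_mem hwr))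
  · simpa [hoff] using List.getElem?_flatten_length_take_add (List.ofFn w) (i := i) (by simp)
      (by simpa using hwq)
  · simpa [hoff] using List.getElem?_flatten_length_take_add (List.ofFn w) (i := j) (by simp)
      (by simpa using hwr)
  · simpa using List.getElem?_flatten_length_take_add p i.isLt hq
  · simpa using List.getElem?_flatten_length_take_add p j.isLt hr

section Occurrences

variable {p π π' : List (List ℕ)}

theorem sb_of_mem_blockOccs {o : (Fin p.length → Fin π.length) × (Fin p.length → ℕ)}
    (ho : o ∈ blockOccs p π) {i j : Fin p.length} (h : sb (π.get (o.1 i)) (π.get (o.1 j))) :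
    sb (p.get i) (p.get j) := by
  have hwindow : ∀ t, ((π.get (o.1 t)).drop (o.2 t)).take (p.get t).length ⊆ π.get (o.1 t) :=
    fun t _ hx => List.mem_of_mem_drop (List.mem_of_mem_take hx)
  refine OrdIso.sb_of_sb (fun t => ?_) ho.2.2 (h.mono (hwindow i) (hwindow j))
  have := ho.2.1 t
  simp only [List.length_take, List.length_drop]
  omega

theorem not_sb_of_mem_blockOccs (hp : ∀ τ ∈ p, τ ≠ [])
    (hpconn : p.IsChain fun a b => a = b ∨ (¬ sb a b ∧ ¬ sb b a))
    {o : (Fin p.length → Fin π.length) × (Fin p.length → ℕ)} (ho : o ∈ blockOccs p π)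
    {i j : Fin p.length} (hij : (o.1 j : ℕ) = o.1 i + 1) :
    ¬ sb (π.get (o.1 i)) (π.get (o.1 j)) ∧ ¬ sb (π.get (o.1 j)) (π.get (o.1 i)) := by
  have hcov : i ⋖ j :=
    CovBy.of_image (OrderEmbedding.ofStrictMono o.1 ho.1) (by simp [Fin.covBy_iff, hij])
  have hj : (j : ℕ) = i + 1 := by simpa [eq_comm] using Fin.covBy_iff.mp hcov
  have hchain : p.get i = p.get j ∨ (¬ sb (p.get i) (p.get j) ∧ ¬ sb (p.get j) (p.get i)) := by
    simpa [hj] using List.isChain_iff_getElem.mp hpconn i (by omega)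
  have hp_incomp : ¬ sb (p.get i) (p.get j) ∧ ¬ sb (p.get j) (p.get i) := by
    rcases hchain with heq | hincomp
    · rw [heq]
      exact ⟨not_sb_self (hp _ (List.get_mem p j)), not_sb_self (hp _ (List.get_mem p j))⟩
    · exact hincomp
  exact ⟨fun h => hp_incomp.1 (sb_of_mem_blockOccs ho h),
    fun h => hp_incomp.2 (sb_of_mem_blockOccs ho h)⟩

theorem mem_blockOccs_comp (e : Fin π.length → Fin π'.length) (he : ∀ x, π'.get (e x) = π.get x)
    {o : (Fin p.length → Fin π.length) × (Fin p.length → ℕ)} (ho : o ∈ blockOccs p π)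
    (hmono : StrictMono (e ∘ o.1)) : (e ∘ o.1, o.2) ∈ blockOccs p π' := by
  refine ⟨hmono, fun i => ?_, ?_⟩
  · simpa only [Function.comp_apply, he] using ho.2.1 i
  · simpa only [Function.comp_apply, he] using ho.2.2

theorem occ_eq_of_perm (σ : Equiv.Perm ℕ) (hσ : ∀ n, π'[σ n]? = π[n]?)
    (hmono : ∀ o ∈ blockOccs p π, StrictMono fun i => σ (o.1 i))
    (hmono' : ∀ o ∈ blockOccs p π', StrictMono fun i => σ.symm (o.1 i)) :
    occ p π = occ p π' := by
  have hrange : ∀ n, n < π.length ↔ σ n < π'.length := fun n => by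
    rw [← not_le, ← not_le, ← List.getElem?_eq_none_iff, ← List.getElem?_eq_none_iff, hσ]
  let e : Fin π.length ≃ Fin π'.length :=
    Fin.equivSubtype.trans ((σ.subtypeEquiv hrange).trans Fin.equivSubtype.symm)
  have he : ∀ x, π'.get (e x) = π.get x := fun x => by
    have hx := hσ x
    rw [List.getElem?_eq_getElem x.isLt, List.getElem?_eq_some_iff] at hx
    exact hx.2
  have he' : ∀ y, π.get (e.symm y) = π'.get y := fun y => by
    rw [← he (e.symm y), e.apply_symm_apply]
  let F : (Fin p.length → Fin π.length) × (Fin p.length → ℕ) →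
      (Fin p.length → Fin π'.length) × (Fin p.length → ℕ) := Prod.map (e ∘ ·) id
  have himage : blockOccs p π' = F '' blockOccs p π := by
    ext o'
    refine ⟨fun ho' => ⟨(e.symm ∘ o'.1, o'.2), ?_, ?_⟩, ?_⟩
    · exact mem_blockOccs_comp e.symm he' ho' (hmono' o' ho')
    · simp [F, Function.comp_def]
    · rintro ⟨o, ho, rfl⟩
      exact mem_blockOccs_comp e he ho (hmono o ho)
  rw [occ, occ, himage, Set.ncard_image_of_injective _
    (e.injective.comp_left.prodMap Function.injective_id)]

theorem strictMono_swap_of_mem_blockOccs (hp : ∀ τ ∈ p, τ ≠ [])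
    (hpconn : p.IsChain fun a b => a = b ∨ (¬ sb a b ∧ ¬ sb b a))
    {o : (Fin p.length → Fin π.length) × (Fin p.length → ℕ)} (ho : o ∈ blockOccs p π)
    {k : ℕ} (hk : k + 1 < π.length) (hcomp : sb π[k] π[k + 1] ∨ sb π[k + 1] π[k]) :
    StrictMono fun i => Equiv.swap k (k + 1) (o.1 i : ℕ) := by
  refine (Fin.val_strictMono.comp ho.1).swap_comp (Order.covBy_add_one k) fun i j hi hj => ?_
  simp only [Function.comp_apply] at hi hj
  have hincomp := not_sb_of_mem_blockOccs hp hpconn ho (i := i) (j := j) (by omega)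
  simp only [List.get_eq_getElem, hi, hj] at hincomp
  exact hcomp.elim hincomp.1 hincomp.2

theorem occ_eq_of_adj (hp : ∀ τ ∈ p, τ ≠ [])
    (hpconn : p.IsChain fun a b => a = b ∨ (¬ sb a b ∧ ¬ sb b a)) (h : Adj π π') :
    occ p π = occ p π' := by
  obtain ⟨u, v, a, b, -, hab⟩ := h
  refine occ_eq_of_perm _ (List.getElem?_swap_append_cons_cons u v a b) (fun o ho => ?_)
    (fun o ho => ?_)
  · exact strictMono_swap_of_mem_blockOccs hp hpconn ho (by simp) (by simpa using hab)
  · rw [Equiv.symm_swap]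
    exact strictMono_swap_of_mem_blockOccs hp hpconn ho (by simp) (by simpa [or_comm] using hab)

end Occurrences

end PCW

theorem stmt_7_general (π π' p : List (List ℕ))
    (hpdec : ∀ τ ∈ p, PCW.IsBlock τ)
    (hpconn : p.Chain' fun a b => a = b ∨ (¬ PCW.sb a b ∧ ¬ PCW.sb b a))
    (h : PCW.Equiv π π') :
    PCW.occ p π = PCW.occ p π' := by
  induction h with
  | refl => rfl
  | tail _ hadj ih => exact ih.trans (PCW.occ_eq_of_adj (fun τ hτ => (hpdec τ hτ).1) hpconn hadj)

/-- If two words over `B` are equivalent in `L(B, ≪)`, then they have the same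
number of occurrences of any piecewise decreasing and connected dashed
pattern. -/
theorem stmt_7 (π π' p : List (List ℕ))
    (hπ : ∀ D ∈ π, PCW.IsBlock D)
    (hpdec : ∀ τ ∈ p, PCW.IsBlock τ)
    (hpconn : p.Chain' fun a b => a = b ∨ (¬ PCW.sb a b ∧ ¬ PCW.sb b a))
    (h : PCW.Equiv π π') :
    PCW.occ p π = PCW.occ p π' :=
  stmt_7_general π π' p hpdec hpconn h
end

section
/- Let B be the set of nonempty finite subsets of positive integers with the order ≪ (D ≪ D' iff D = D' or D lies entirely below D'). For any word π over B and any piecewise decreasing and connected patterns p₁, …, p_m, the joint statistics (bDES, (p₁, …, p_m)) and (bASC, (p₁, …, p_m)) are equidistributed over the equivalence class of π in L(B, ≪), where bDES(π) = {i : D_i ≫ D_{i+1}} and bASC(π) = {i : D_i ≪ D_{i+1}, D_i ≠ D_{i+1}}. -/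
namespace PCW

/-- Block descent set of `π = D₁ | D₂ | ⋯ | D_k`: positions `i`,
`1 ≤ i ≤ k-1`, with `D_i ≫ D_{i+1}`. -/
def bDES (π : List (List ℕ)) : Set ℕ :=
  {i | ∃ h : i < π.length, 0 < i ∧ sb (π[i]'h) (π[i - 1]'(by omega))}

/-- Block rise set of `π = D₁ | D₂ | ⋯ | D_k`: positions `i`,
`1 ≤ i ≤ k-1`, with `D_i ≪ D_{i+1}`, `D_i ≠ D_{i+1}`. -/
def bASC (π : List (List ℕ)) : Set ℕ :=
  {i | ∃ h : i < π.length, 0 < i ∧ sb (π[i - 1]'(by omega)) (π[i]'h)}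

end PCW

/-!
Fix a set `T` of junctions and call two words `T`-equivalent when they differ by swaps of
adjacent comparable blocks that never cross a junction of `T`. Every `T`-class contains exactly
one word whose descents all lie in `T` and exactly one whose ascents all lie in `T`. They exist
because swapping a descent (ascent) away lowers the number of inverted pairs; they are unique
because in such a word the first letter is forced by the projections of the class onto pairs of
non-commuting letters and by the contents of the prefixes ending at junctions. So for every `T`
the class of `π` has as many words with `bDES ⊆ T` as with `bASC ⊆ T`, and Möbius inversion
over the subsets of `T` turns this into the equidistribution of `bDES` and `bASC`.

The pattern counts are constant on the class: an occurrence of a connected pattern of nonempty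
blocks never uses both blocks of a swapped comparable pair, since these would come from adjacent
and comparable blocks of the pattern. Hence relabelling positions maps occurrences bijectively.
-/

namespace List

theorem forall_not_of_filter_append_cons_eq {α : Type*} {p : α → Bool} {l s t : List α}
    {a : α} (h : (l ++ a :: s).filter p = a :: t) (ha : a ∉ l) : ∀ c ∈ l, ¬ p c := by
  rw [List.filter_append] at h
  cases hl : l.filter p with
  | nil => exact List.filter_eq_nil_iff.1 hl
  | cons d l' =>
    rw [hl, List.cons_append, List.cons.injEq] at h
    obtain ⟨rfl, -⟩ := h
    exact absurd (List.mem_of_mem_filter (hl ▸ List.mem_cons_self)) ha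

theorem exists_mem_zip_of_mem_right {α β : Type*} {l₁ : List α} {l₂ : List β}
    (hlen : l₁.length = l₂.length) {y : β} (hy : y ∈ l₂) :
    ∃ x ∈ l₁, (x, y) ∈ l₁.zip l₂ := by
  obtain ⟨k, hk, rfl⟩ := List.getElem_of_mem hy
  exact ⟨l₁[k], List.getElem_mem _, List.mem_iff_getElem.2 ⟨k, by simp; omega, by simp⟩⟩

theorem zip_getElem_subset_zip_flatten {α β : Type*} {L : List (List α)} {P : List (List β)}
    (hlen : L.map List.length = P.map List.length) {i : ℕ} (hi : i < L.length)
    (hi' : i < P.length) : L[i].zip P[i] ⊆ L.flatten.zip P.flatten := by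
  induction L generalizing P i with
  | nil => simp at hi
  | cons l L ih =>
    cases P with
    | nil => simp at hi'
    | cons q P =>
      simp only [List.map_cons, List.cons.injEq] at hlen
      rw [List.flatten_cons, List.flatten_cons, List.zip_append hlen.1]
      cases i with
      | zero => exact List.subset_append_left _ _
      | succ i =>
        exact List.Subset.trans (ih hlen.2 (by simpa using hi) (by simpa using hi'))
          (List.subset_append_right _ _)

end List

theorem StrictMono.val_eq_succ_of_val_apply_eq_succ {n m : ℕ} {f : Fin n → Fin m}
    (hf : StrictMono f) {i j : Fin n} (h : (f j : ℕ) = f i + 1) : (j : ℕ) = i + 1 := by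
  have hij : i < j := hf.lt_iff_lt.1 (Fin.lt_def.2 (by omega))
  by_contra hne
  have hk : (i : ℕ) + 1 < n := by omega
  have h₁ := Fin.lt_def.1 (hf (show i < ⟨i + 1, hk⟩ from Fin.lt_def.2 (by simp)))
  have h₂ := Fin.lt_def.1 (hf (show ⟨i + 1, hk⟩ < j from Fin.lt_def.2 (by simp; omega)))
  omega

theorem Equiv.swap_apply_lt_swap_apply {t k l : ℕ} (hkl : k < l) (h : ¬ (k = t ∧ l = t + 1)) :
    Equiv.swap t (t + 1) k < Equiv.swap t (t + 1) l := by
  simp only [Equiv.swap_apply_def]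
  split_ifs <;> omega

theorem eq_of_forall_sum_powerset_eq {ι M : Type*} [DecidableEq ι] [AddCancelCommMonoid M]
    {F G : Finset ι → M}
    (h : ∀ T : Finset ι, ∑ U ∈ T.powerset, F U = ∑ U ∈ T.powerset, G U) : F = G := by
  funext T
  induction T using Finset.strongInduction with
  | H T ih =>
    have hT := h T
    rw [← Finset.sum_erase_add _ _ (Finset.mem_powerset_self T),
      ← Finset.sum_erase_add _ _ (Finset.mem_powerset_self T),
      Finset.sum_congr rfl fun U hU => ih U ?_] at hT
    · exact add_left_cancel hT
    · rw [Finset.mem_erase, Finset.mem_powerset] at hU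
      exact hU.2.ssubset_of_ne hU.1

theorem ncard_sep_subset_eq_sum {β : Type*} {C : Set β} (hC : C.Finite) {f : β → Set ℕ}
    (hf : ∀ x, (f x).Finite) (T : Finset ℕ) :
    {x ∈ C | f x ⊆ T}.ncard = ∑ U ∈ T.powerset, {x ∈ C | f x = U}.ncard := by
  have hunion :
      {x ∈ C | f x ⊆ T} = ⋃ U ∈ (T.powerset : Set (Finset ℕ)), {x ∈ C | f x = U} := by
    ext x
    simp only [Set.mem_iUnion, Finset.coe_powerset, Set.mem_preimage,
      Set.mem_powerset_iff, Finset.coe_subset, exists_prop]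
    constructor
    · rintro ⟨hx, hxT⟩
      exact ⟨(hf x).toFinset, by simpa using hxT, hx, by simp⟩
    · rintro ⟨U, hUT, hx, hxU⟩
      exact ⟨hx, hxU ▸ Finset.coe_subset.2 hUT⟩
  rw [hunion, Set.Finite.ncard_biUnion (Finset.finite_toSet _)
    (fun U _ => hC.subset fun x hx => hx.1), finsum_mem_coe_finset]
  intro U _ V _ hUV
  refine Set.disjoint_left.2 fun x hU hV => hUV ?_
  exact Finset.coe_injective (hU.2.symm.trans hV.2)

theorem ncard_sep_eq_of_forall_ncard_sep_subset_eq {β : Type*} {C : Set β} (hC : C.Finite)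
    {f g : β → Set ℕ} (hf : ∀ x, (f x).Finite) (hg : ∀ x, (g x).Finite)
    (h : ∀ T : Finset ℕ, {x ∈ C | f x ⊆ T}.ncard = {x ∈ C | g x ⊆ T}.ncard)
    (S : Set ℕ) :
    {x ∈ C | f x = S}.ncard = {x ∈ C | g x = S}.ncard := by
  by_cases hS : S.Finite
  · lift S to Finset ℕ using hS
    refine congrFun (eq_of_forall_sum_powerset_eq (F := fun U => {x ∈ C | f x = U}.ncard)
      (G := fun U => {x ∈ C | g x = U}.ncard) fun T => ?_) S
    rw [← ncard_sep_subset_eq_sum hC hf, ← ncard_sep_subset_eq_sum hC hg, h]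
  · have hempty : ∀ k : β → Set ℕ, (∀ x, (k x).Finite) → {x ∈ C | k x = S} = ∅ :=
      fun k hk => Set.eq_empty_of_forall_notMem fun x hx => hS (hx.2 ▸ hk x)
    rw [hempty f hf, hempty g hg]

namespace PCW

open Function Relation

section Swaps

variable {α : Type*}

/-- Junction `i` separates the positions `i - 1` and `i`, as in `bDES` and `bASC`. -/
inductive SwapOutside (r : α → α → Prop) (T : Set ℕ) : List α → List α → Prop
  | swap (u v : List α) {a b : α} (hab : r a b ∨ r b a) (hT : u.length + 1 ∉ T) :
      SwapOutside r T (u ++ a :: b :: v) (u ++ b :: a :: v)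

def ascents (r : α → α → Prop) (w : List α) : Set ℕ :=
  {i | ∃ h : i < w.length, 0 < i ∧ r (w[i - 1]'(by omega)) w[i]}

def invCount (r : α → α → Prop) [DecidableRel r] : List α → ℕ
  | [] => 0
  | a :: w => w.countP (r a ·) + invCount r w

variable {r : α → α → Prop} {T : Set ℕ} {w w' : List α}

theorem SwapOutside.symm (h : SwapOutside r T w w') : SwapOutside r T w' w := by
  obtain ⟨u, v, hab, hT⟩ := h
  exact .swap u v hab.symm hT

theorem SwapOutside.perm (h : SwapOutside r T w w') : w.Perm w' := by
  obtain ⟨u, v, -, -⟩ := h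
  exact (List.Perm.swap _ _ _).append_left u

theorem SwapOutside.mono {T' : Set ℕ} (hT : T' ⊆ T) (h : SwapOutside r T w w') :
    SwapOutside r T' w w' := by
  obtain ⟨u, v, hab, huT⟩ := h
  exact .swap u v hab fun h => huT (hT h)

theorem swapOutside_swap : SwapOutside (swap r) T = SwapOutside r T := by
  ext w w'
  constructor <;> rintro ⟨u, v, hab, hT⟩ <;> exact .swap u v hab.symm hT

instance : Std.Symm (SwapOutside r T) := ⟨fun _ _ h => h.symm⟩

theorem one_mem_ascents {a b : α} (w : List α) (h : r a b) : 1 ∈ ascents r (a :: b :: w) :=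
  ⟨by simp, one_pos, h⟩

theorem succ_mem_ascents_cons {i : ℕ} (a : α) (h : i ∈ ascents r w) :
    i + 1 ∈ ascents r (a :: w) := by
  obtain ⟨hi, hi0, hr⟩ := h
  obtain ⟨j, rfl⟩ : ∃ j, i = j + 1 := ⟨i - 1, by omega⟩
  exact ⟨by simpa using hi, by omega, by simpa using hr⟩

theorem ascents_subset_of_isPrefix (h : w <+: w') : ascents r w ⊆ ascents r w' := by
  rintro i ⟨hi, hi0, hr⟩
  refine ⟨by have := h.length_le; omega, hi0, ?_⟩
  rwa [← h.getElem, ← h.getElem]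

theorem ascents_finite (w : List α) : (ascents r w).Finite :=
  (Set.finite_Iio w.length).subset fun _ ⟨hi, _⟩ => hi

theorem exists_eq_append_of_mem_ascents {i : ℕ} (h : i ∈ ascents r w) :
    ∃ u a b v, w = u ++ a :: b :: v ∧ u.length + 1 = i ∧ r a b := by
  obtain ⟨hi, hi0, hr⟩ := h
  obtain ⟨j, rfl⟩ : ∃ j, i = j + 1 := ⟨i - 1, by omega⟩
  refine ⟨w.take j, w[j], w[j + 1], w.drop (j + 2), ?_, by simp; omega, hr⟩
  rw [← List.drop_eq_getElem_cons, ← List.drop_eq_getElem_cons, List.take_append_drop]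

theorem invCount_swap_lt [DecidableRel r] [Std.Asymm r] {a b : α} (u v : List α) (hab : r a b) :
    invCount r (u ++ b :: a :: v) < invCount r (u ++ a :: b :: v) := by
  induction u with
  | nil =>
    simp only [List.nil_append, invCount, asymm hab, decide_false, Bool.false_eq_true,
      not_false_eq_true, List.countP_cons_of_neg, hab, decide_true, List.countP_cons_of_pos]
    omega
  | cons c u ih =>
    simp only [List.cons_append, invCount]
    rw [((List.Perm.swap a b v).append_left u).countP_eq]
    omega

theorem exists_reflTransGen_swapOutside_ascents_subset [Std.Asymm r] (T : Set ℕ) (w : List α) :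
    ∃ z, ReflTransGen (SwapOutside r T) w z ∧ ascents r z ⊆ T := by
  classical
  induction hn : invCount r w using Nat.strong_induction_on generalizing w with
  | _ n ih =>
    by_cases hw : ascents r w ⊆ T
    · exact ⟨w, .refl, hw⟩
    obtain ⟨i, hi, hiT⟩ := Set.not_subset.1 hw
    obtain ⟨u, a, b, v, rfl, rfl, hab⟩ := exists_eq_append_of_mem_ascents hi
    obtain ⟨z, hz, hzT⟩ := ih _ (hn ▸ invCount_swap_lt u v hab) _ rfl
    exact ⟨z, .head (.swap u v (.inl hab) hiT) hz, hzT⟩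

structure SwapInvariants [DecidableEq α] (r : α → α → Prop) (T : Set ℕ) (w w' : List α) :
    Prop where
  filter_eq : ∀ x y, ¬ r x y → ¬ r y x →
    w.filter (fun c => c = x ∨ c = y) = w'.filter (fun c => c = x ∨ c = y)
  take_perm : ∀ t ∈ T, (w.take t).Perm (w'.take t)

section Invariants

variable [DecidableEq α]

theorem SwapInvariants.symm (h : SwapInvariants r T w w') : SwapInvariants r T w' w :=
  ⟨fun x y hxy hyx => (h.filter_eq x y hxy hyx).symm, fun t ht => (h.take_perm t ht).symm⟩

theorem SwapInvariants.trans {w'' : List α} (h : SwapInvariants r T w w')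
    (h' : SwapInvariants r T w' w'') : SwapInvariants r T w w'' :=
  ⟨fun x y hxy hyx => (h.filter_eq x y hxy hyx).trans (h'.filter_eq x y hxy hyx),
    fun t ht => (h.take_perm t ht).trans (h'.take_perm t ht)⟩

theorem SwapOutside.swapInvariants (h : SwapOutside r T w w') : SwapInvariants r T w w' := by
  obtain @⟨u, v, a, b, hab, hT⟩ := h
  constructor
  · intro x y hxy hyx
    rw [List.filter_append, List.filter_append]
    congr 1
    by_cases ha : a = x ∨ a = y <;> by_cases hb : b = x ∨ b = y
    · obtain rfl | hne := eq_or_ne a b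
      · rfl
      · exfalso
        rcases ha with rfl | rfl <;> rcases hb with rfl | rfl <;> tauto
    all_goals simp [ha, hb]
  · intro t ht
    rw [List.take_append, List.take_append]
    refine .append_left _ ?_
    match hk : t - u.length with
    | 0 => rfl
    | 1 => exact absurd (show t = u.length + 1 by omega ▸ ht) hT
    | k + 2 => exact .swap _ _ _

theorem SwapInvariants.of_reflTransGen (h : ReflTransGen (SwapOutside r T) w w') :
    SwapInvariants r T w w' := by
  induction h with
  | refl => exact ⟨fun _ _ _ _ => rfl, fun _ _ => .refl _⟩
  | tail _ hstep ih => exact ih.trans hstep.swapInvariants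

theorem SwapInvariants.of_cons {a : α} {u v : List α} (h : SwapInvariants r T (a :: u) (a :: v)) :
    SwapInvariants r {t | t + 1 ∈ T} u v := by
  constructor
  · intro x y hxy hyx
    have := h.filter_eq x y hxy hyx
    rw [List.filter_cons, List.filter_cons] at this
    split_ifs at this
    exacts [List.cons.inj this |>.2, this]
  · intro t ht
    simpa using h.take_perm (t + 1) ht

end Invariants

theorem ascents_cons_append_singleton_nonempty [IsTrans α r] {x a : α} {l : List α}
    (hx : r x a) (hl : ∀ c ∈ l, r c a ∨ r a c) : (ascents r (x :: (l ++ [a]))).Nonempty := by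
  induction l generalizing x with
  | nil => exact ⟨1, one_mem_ascents [] hx⟩
  | cons c l ih =>
    rcases hl c List.mem_cons_self with hca | hac
    · obtain ⟨i, hi⟩ := ih hca fun d hd => hl d (List.mem_cons_of_mem c hd)
      exact ⟨i + 1, succ_mem_ascents_cons x hi⟩
    · exact ⟨1, one_mem_ascents _ (_root_.trans hx hac)⟩

section Uniqueness

variable [IsStrictOrder α r] [DecidableEq α]

theorem SwapInvariants.not_rel {a b : α} {u v : List α}
    (h : SwapInvariants r T (a :: u) (b :: v)) (hv : ascents r (b :: v) ⊆ T) : ¬ r b a := by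
  intro hba
  have hab : a ≠ b := by rintro rfl; exact irrefl a hba
  have ha : a ∈ v := by
    have hmem : a ∈ (b :: v).filter (fun c => c = a ∨ c = a) :=
      h.filter_eq a a (irrefl a) (irrefl a) ▸ by simp
    simpa [hab] using List.mem_of_mem_filter hmem
  obtain ⟨l, v₂, hal, rfl, -⟩ := List.exists_erase_eq ha
  have hbl : a ∉ b :: l := by simp [hab, hal]
  have hcomp : ∀ c ∈ l, r c a ∨ r a c := by
    intro c hc
    by_contra hnc
    obtain ⟨hca, hac⟩ := not_or.1 hnc
    have hf := h.filter_eq a c hac hca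
    rw [List.filter_cons_of_pos (by simp)] at hf
    simpa using List.forall_not_of_filter_append_cons_eq hf.symm hbl c (List.mem_cons_of_mem b hc)
  have hT : ∀ t ∈ T, 0 < t → l.length + 2 ≤ t := by
    intro t ht ht0
    by_contra hlt
    have hmem : a ∈ (a :: u).take t := by
      obtain ⟨t, rfl⟩ : ∃ s, t = s + 1 := ⟨t - 1, by omega⟩
      simp
    have := (h.take_perm t ht).subset hmem
    rw [← List.cons_append, List.take_append_of_le_length (by simp; omega)] at this
    exact hbl (List.mem_of_mem_take this)
  -- climbing from `b` below `a` to the first `a`, through letters comparable with `a` and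
  -- without crossing a junction of `T`, passes an ascent outside `T`
  obtain ⟨i, hi⟩ := ascents_cons_append_singleton_nonempty hba hcomp
  have hiT := hv (ascents_subset_of_isPrefix ⟨v₂, by simp⟩ hi)
  obtain ⟨hlen, hi0, -⟩ := hi
  have := hT i hiT hi0
  simp only [List.length_cons, List.length_append, List.length_nil] at hlen
  omega

theorem SwapInvariants.eq {w w' : List α} (h : SwapInvariants r T w w') (hw : ascents r w ⊆ T)
    (hw' : ascents r w' ⊆ T) : w = w' := by
  induction w generalizing w' T with
  | nil =>
    cases w' with
    | nil => rfl
    | cons c v => simpa using h.filter_eq c c (irrefl c) (irrefl c)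
  | cons a u ih =>
    cases w' with
    | nil => simpa using h.filter_eq a a (irrefl a) (irrefl a)
    | cons b v =>
      obtain rfl | hab := eq_or_ne a b
      · exact congrArg (a :: ·) <| ih h.of_cons (fun i hi => hw (succ_mem_ascents_cons a hi))
          (fun i hi => hw' (succ_mem_ascents_cons a hi))
      · exfalso
        by_cases hcomp : r a b ∨ r b a
        · rcases hcomp with hr | hr
          exacts [h.symm.not_rel hw hr, h.not_rel hw' hr]
        · obtain ⟨hab', hba'⟩ := not_or.1 hcomp
          simpa [hab] using h.filter_eq a b hab' hba'

end Uniqueness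

theorem eq_of_reflTransGen_swapOutside [IsStrictOrder α r]
    (h : ReflTransGen (SwapOutside r T) w w') (hw : ascents r w ⊆ T)
    (hw' : ascents r w' ⊆ T) : w = w' := by
  classical
  exact (SwapInvariants.of_reflTransGen h).eq hw hw'

theorem perm_of_reflTransGen_swapOutside (h : ReflTransGen (SwapOutside r T) w w') : w.Perm w' := by
  induction h with
  | refl => rfl
  | tail _ hstep ih => exact ih.trans hstep.perm

theorem finite_setOf_reflTransGen_swapOutside (w₀ : List α) :
    {w | ReflTransGen (SwapOutside r T) w₀ w}.Finite := by
  classical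
  refine w₀.permutations.toFinset.finite_toSet.subset fun w hw => ?_
  simpa using (perm_of_reflTransGen_swapOutside hw).symm

theorem ncard_ascents_swap_subset_eq [IsStrictOrder α r] (w₀ : List α) (T : Set ℕ) :
    {w | ReflTransGen (SwapOutside r ∅) w₀ w ∧ ascents (swap r) w ⊆ T}.ncard
      = {w | ReflTransGen (SwapOutside r ∅) w₀ w ∧ ascents r w ⊆ T}.ncard := by
  choose f hf using exists_reflTransGen_swapOutside_ascents_subset (r := r) T
  choose g hg using exists_reflTransGen_swapOutside_ascents_subset (r := swap r) T
  rw [swapOutside_swap] at hg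
  have hT : ∀ {w w'}, ReflTransGen (SwapOutside r T) w w' →
      ReflTransGen (SwapOutside r ∅) w w' :=
    fun h => ReflTransGen.mono (fun _ _ => SwapOutside.mono (Set.empty_subset T)) _ _ h
  refine Set.ncard_congr (fun w _ => f w) ?_ ?_ ?_
  · rintro w ⟨hw, -⟩
    exact ⟨hw.trans (hT (hf w).1), (hf w).2⟩
  · rintro w₁ w₂ ⟨-, h₁⟩ ⟨-, h₂⟩ he
    have h₁₂ : ReflTransGen (SwapOutside r T) w₁ w₂ :=
      (hf w₁).1.trans (he ▸ symm (hf w₂).1)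
    exact eq_of_reflTransGen_swapOutside (r := swap r) (swapOutside_swap ▸ h₁₂) h₁ h₂
  · rintro z ⟨hz, hzT⟩
    refine ⟨g z, ⟨hz.trans (hT (hg z).1), (hg z).2⟩, ?_⟩
    exact eq_of_reflTransGen_swapOutside (symm (hf (g z)).1 |>.trans (symm (hg z).1)) (hf _).2 hzT

theorem ncard_ascents_swap_eq [IsStrictOrder α r] (w₀ : List α) (S : Set ℕ) :
    {w | ReflTransGen (SwapOutside r ∅) w₀ w ∧ ascents (swap r) w = S}.ncard
      = {w | ReflTransGen (SwapOutside r ∅) w₀ w ∧ ascents r w = S}.ncard :=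
  ncard_sep_eq_of_forall_ncard_sep_subset_eq (finite_setOf_reflTransGen_swapOutside w₀)
    ascents_finite ascents_finite (ncard_ascents_swap_subset_eq w₀ ·) S

end Swaps

theorem sb.mono_s8 {a b c d : List ℕ} (h : sb a b) (hc : c ⊆ a) (hd : d ⊆ b) : sb c d :=
  fun x hx y hy => h x (hc hx) y (hd hy)

theorem OrdIso.lt_of_mem_zip {l₁ l₂ : List ℕ} (h : OrdIso l₁ l₂) {p q : ℕ × ℕ}
    (hp : p ∈ l₁.zip l₂) (hq : q ∈ l₁.zip l₂) (hpq : p.1 < q.1) : p.2 < q.2 := by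
  obtain ⟨i, hi, rfl⟩ := List.getElem_of_mem hp
  obtain ⟨j, hj, rfl⟩ := List.getElem_of_mem hq
  simp only [List.getElem_zip, List.length_zip] at hpq hi hj ⊢
  exact (h.2 i j (by omega) (by omega)).1 hpq

theorem OrdIso.sb_getElem_flatten {L P : List (List ℕ)} (h : OrdIso L.flatten P.flatten)
    (hlen : L.map List.length = P.map List.length) {i j : ℕ} (hi : i < L.length)
    (hj : j < L.length) (hi' : i < P.length) (hj' : j < P.length) (hsb : sb L[i] L[j]) :
    sb P[i] P[j] := by
  have hlen' : ∀ k (hk : k < L.length) (hk' : k < P.length), L[k].length = P[k].length :=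
    fun k hk hk' => by
      have := List.getElem_of_eq hlen (i := k) (by simpa using hk)
      rwa [List.getElem_map, List.getElem_map] at this
  intro x hx y hy
  obtain ⟨x', hx', hxz⟩ := List.exists_mem_zip_of_mem_right (hlen' i hi hi') hx
  obtain ⟨y', hy', hyz⟩ := List.exists_mem_zip_of_mem_right (hlen' j hj hj') hy
  exact h.lt_of_mem_zip (List.zip_getElem_subset_zip_flatten hlen hi _ hxz)
    (List.zip_getElem_subset_zip_flatten hlen hj _ hyz) (hsb x' hx' y' hy')

def occPieces (p π : List (List ℕ))
    (o : (Fin p.length → Fin π.length) × (Fin p.length → ℕ)) : List (List ℕ) :=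
  List.ofFn fun i : Fin p.length => ((π.get (o.1 i)).drop (o.2 i)).take (p.get i).length

section Occurrences

variable {p π : List (List ℕ)} {o : (Fin p.length → Fin π.length) × (Fin p.length → ℕ)}

theorem map_length_occPieces (ho : o ∈ blockOccs p π) :
    (occPieces p π o).map List.length = p.map List.length := by
  refine List.ext_getElem (by simp [occPieces]) fun k h₁ h₂ => ?_
  have := ho.2.1 ⟨k, by simpa using h₂⟩
  simp only [List.get_eq_getElem] at this
  simp [occPieces]
  omega

theorem getElem_occPieces_subset (k : Fin p.length) :
    (occPieces p π o)[(k : ℕ)]'(by simp [occPieces]) ⊆ π.get (o.1 k) := by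
  simp only [occPieces, List.getElem_ofFn]
  exact List.Subset.trans (List.take_subset _ _) (List.drop_subset _ _)

theorem comp_mem_blockOccs {π' : List (List ℕ)} (e : Fin π.length → Fin π'.length)
    (he : ∀ k, π'.get (e k) = π.get k) (ho : o ∈ blockOccs p π)
    (hmono : StrictMono (e ∘ o.1)) :
    (e ∘ o.1, o.2) ∈ blockOccs p π' := by
  obtain ⟨-, hbound, hiso⟩ := ho
  exact ⟨hmono, by simpa only [comp_apply, he] using hbound,
    by simpa only [comp_apply, he] using hiso⟩

end Occurrences

section SwapFin

variable (u v : List (List ℕ)) (a b : List ℕ)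

def swapFin (k : Fin (u ++ a :: b :: v).length) : Fin (u ++ b :: a :: v).length :=
  ⟨Equiv.swap u.length (u.length + 1) k, by
    have := k.isLt
    simp only [Equiv.swap_apply_def, List.length_append, List.length_cons] at this ⊢
    split_ifs <;> omega⟩

variable {u v a b}

theorem get_swapFin (k : Fin (u ++ a :: b :: v).length) :
    (u ++ b :: a :: v).get (swapFin u v a b k) = (u ++ a :: b :: v).get k := by
  obtain ⟨k, hk⟩ := k
  simp only [swapFin, List.get_eq_getElem, Equiv.swap_apply_def]
  split_ifs with h₁ h₂
  · subst h₁; simp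
  · subst h₂; simp
  · simp only [List.getElem_append]
    split_ifs with h₃
    · rfl
    · obtain ⟨m, hm⟩ : ∃ m, k - u.length = m + 2 := ⟨k - u.length - 2, by omega⟩
      simp [hm]

theorem swapFin_swapFin (k : Fin (u ++ a :: b :: v).length) :
    swapFin u v b a (swapFin u v a b k) = k :=
  Fin.ext (Equiv.swap_apply_self _ _ _)

end SwapFin

theorem not_hits_both_of_mem_blockOccs {p u v : List (List ℕ)} {a b : List ℕ}
    (hcomp : sb a b ∨ sb b a) (hp : ∀ τ ∈ p, τ ≠ [])
    (hconn : p.IsChain fun x y => x = y ∨ ¬ sb x y ∧ ¬ sb y x)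
    {o : (Fin p.length → Fin (u ++ a :: b :: v).length) × (Fin p.length → ℕ)}
    (ho : o ∈ blockOccs p (u ++ a :: b :: v)) (i j : Fin p.length) :
    ¬ ((o.1 i : ℕ) = u.length ∧ (o.1 j : ℕ) = u.length + 1) := by
  rintro ⟨hi, hj⟩
  have hij :=
    StrictMono.val_eq_succ_of_val_apply_eq_succ ho.1 (hj.trans (congrArg (· + 1) hi.symm))
  obtain ⟨i, hip⟩ := i
  obtain ⟨j, hjp⟩ := j
  obtain rfl : j = i + 1 := hij
  have ha := getElem_occPieces_subset (o := o) ⟨i, hip⟩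
  have hb := getElem_occPieces_subset (o := o) ⟨i + 1, hjp⟩
  rw [List.get_eq_getElem] at ha hb
  simp only [hi, hj, List.getElem_append_right, le_refl, Nat.sub_self, List.getElem_cons_zero,
    Nat.add_sub_cancel_left, List.getElem_cons_succ, le_add_iff_nonneg_right, zero_le] at ha hb
  have hL := map_length_occPieces ho
  have hlen : (occPieces p (u ++ a :: b :: v) o).length = p.length := by simp [occPieces]
  have hiso : OrdIso (occPieces p (u ++ a :: b :: v) o).flatten p.flatten := ho.2.2
  have hsb : sb p[i] p[i + 1] ∨ sb p[i + 1] p[i] :=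
    (hcomp.imp (·.mono ha hb) (·.mono hb ha)).imp
      (hiso.sb_getElem_flatten hL (by omega) (by omega) hip hjp)
      (hiso.sb_getElem_flatten hL (by omega) (by omega) hjp hip)
  rcases List.isChain_iff_getElem.1 hconn i hjp with heq | ⟨h₁, h₂⟩
  · obtain ⟨x, hx⟩ := List.exists_mem_of_ne_nil _ (hp _ (List.getElem_mem hip))
    rw [← heq] at hsb
    exact lt_irrefl x (hsb.elim (· x hx x hx) (· x hx x hx))
  · exact hsb.elim h₁ h₂

section Adj

variable {p : List (List ℕ)}

theorem swapFin_comp_mem_blockOccs (hp : ∀ τ ∈ p, τ ≠ [])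
    (hconn : p.IsChain fun x y => x = y ∨ ¬ sb x y ∧ ¬ sb y x)
    {u v : List (List ℕ)} {a b : List ℕ} (hcomp : sb a b ∨ sb b a)
    {o : (Fin p.length → Fin (u ++ a :: b :: v).length) × (Fin p.length → ℕ)}
    (ho : o ∈ blockOccs p (u ++ a :: b :: v)) :
    (swapFin u v a b ∘ o.1, o.2) ∈ blockOccs p (u ++ b :: a :: v) :=
  comp_mem_blockOccs _ get_swapFin ho fun _ _ hij =>
    Equiv.swap_apply_lt_swap_apply (ho.1 hij) (not_hits_both_of_mem_blockOccs hcomp hp hconn ho _ _)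

theorem occ_eq_of_adj_s8 (hp : ∀ τ ∈ p, τ ≠ [])
    (hconn : p.IsChain fun x y => x = y ∨ ¬ sb x y ∧ ¬ sb y x) {w w' : List (List ℕ)}
    (h : Adj w w') : occ p w = occ p w' := by
  obtain ⟨u, v, a, b, -, hcomp⟩ := h
  refine Set.ncard_congr (fun o _ => (swapFin u v a b ∘ o.1, o.2))
    (fun o ho => swapFin_comp_mem_blockOccs hp hconn hcomp ho) ?_ ?_
  · rintro o₁ o₂ - - h
    simp only [Prod.mk.injEq] at h
    refine Prod.ext (funext fun i => ?_) h.2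
    simpa only [comp_apply, swapFin_swapFin] using congrArg (swapFin u v b a) (congrFun h.1 i)
  · intro o' ho'
    refine ⟨_, swapFin_comp_mem_blockOccs hp hconn hcomp.symm ho', ?_⟩
    ext : 1 <;> simp [comp_def, swapFin_swapFin]

theorem occ_eq_of_equiv (hp : ∀ τ ∈ p, τ ≠ [])
    (hconn : p.IsChain fun x y => x = y ∨ ¬ sb x y ∧ ¬ sb y x) {w w' : List (List ℕ)}
    (h : Equiv w w') : occ p w = occ p w' := by
  induction h with
  | refl => rfl
  | tail _ hstep ih => exact ih.trans (occ_eq_of_adj_s8 hp hconn hstep)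

end Adj

theorem sb_trans {a b c : List ℕ} (hb : b ≠ []) (hab : sb a b) (hbc : sb b c) : sb a c := by
  obtain ⟨y, hy⟩ := List.exists_mem_of_ne_nil b hb
  exact fun x hx z hz => (hab x hx y hy).trans (hbc y hy z hz)

/-- `≪` restricted to blocks; on all of `List ℕ` it is not irreflexive, as `sb [] []` holds. -/
def blockLt (a b : List ℕ) : Prop := a ≠ [] ∧ b ≠ [] ∧ sb a b

instance : IsStrictOrder (List ℕ) blockLt where
  irrefl a := fun ⟨ha, _, h⟩ => by
    obtain ⟨x, hx⟩ := List.exists_mem_of_ne_nil a ha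
    exact lt_irrefl x (h x hx x hx)
  trans _ _ _ := fun ⟨ha, hb, hab⟩ ⟨_, hc, hbc⟩ => ⟨ha, hc, sb_trans hb hab hbc⟩

section Blocks

variable {w : List (List ℕ)}

theorem bASC_eq_ascents (hw : ∀ D ∈ w, D ≠ []) : bASC w = ascents blockLt w := by
  ext i
  exact ⟨fun ⟨h, h0, hsb⟩ => ⟨h, h0, hw _ (List.getElem_mem _), hw _ (List.getElem_mem _),
    hsb⟩,
    fun ⟨h, h0, _, _, hsb⟩ => ⟨h, h0, hsb⟩⟩

theorem bDES_eq_ascents (hw : ∀ D ∈ w, D ≠ []) : bDES w = ascents (swap blockLt) w := by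
  ext i
  exact ⟨fun ⟨h, h0, hsb⟩ => ⟨h, h0, hw _ (List.getElem_mem _), hw _ (List.getElem_mem _),
    hsb⟩,
    fun ⟨h, h0, _, _, hsb⟩ => ⟨h, h0, hsb⟩⟩

theorem equiv_iff_reflTransGen (hw : ∀ D ∈ w, D ≠ []) {w' : List (List ℕ)} :
    Equiv w w' ↔ ReflTransGen (SwapOutside blockLt ∅) w w' := by
  constructor
  · intro h
    induction h with
    | refl => rfl
    | tail _ hstep ih =>
      obtain ⟨u, v, a, b, -, hab⟩ := hstep
      have hne : ∀ D ∈ u ++ a :: b :: v, D ≠ [] := fun D hD =>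
        hw D ((perm_of_reflTransGen_swapOutside ih).symm.subset hD)
      refine ih.tail (.swap u v ?_ (Set.notMem_empty _))
      exact hab.imp (⟨hne a (by simp), hne b (by simp), ·⟩)
        (⟨hne b (by simp), hne a (by simp), ·⟩)
  · intro h
    induction h with
    | refl => exact .refl
    | tail _ hstep ih =>
      obtain @⟨u, v, a, b, hab, -⟩ := hstep
      obtain rfl | hne := eq_or_ne a b
      · exact ih
      · exact ih.tail (.swap u v a b hne (hab.imp (·.2.2) (·.2.2)))

theorem ncard_bDES_eq_ncard_bASC (hw : ∀ D ∈ w, D ≠ []) (S : Set ℕ) :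
    {w' | Equiv w w' ∧ bDES w' = S}.ncard = {w' | Equiv w w' ∧ bASC w' = S}.ncard := by
  have hclass {stat : List (List ℕ) → Set ℕ} {r : List ℕ → List ℕ → Prop}
      (hstat : ∀ w', (∀ D ∈ w', D ≠ []) → stat w' = ascents r w') :
      {w' | Equiv w w' ∧ stat w' = S}
        = {w' | ReflTransGen (SwapOutside blockLt ∅) w w' ∧ ascents r w' = S} := by
    ext w'
    change _ ∧ _ ↔ _ ∧ _
    rw [equiv_iff_reflTransGen hw]
    refine and_congr_right fun h => ?_
    rw [hstat w' fun D hD => hw D ((perm_of_reflTransGen_swapOutside h).symm.subset hD)]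
  rw [hclass fun _ => bDES_eq_ascents, hclass fun _ => bASC_eq_ascents]
  exact ncard_ascents_swap_eq w S

end Blocks

end PCW

/-- For any word `π` over `B` and piecewise decreasing connected patterns
`p₁, …, p_m`, the joint statistics `(bDES, (p₁, …, p_m))` and
`(bASC, (p₁, …, p_m))` are equidistributed over the class of `π` in
`L(B, ≪)`. -/
theorem stmt_8 (π : List (List ℕ)) (hπ : ∀ D ∈ π, PCW.IsBlock D)
    (m : ℕ) (ps : Fin m → List (List ℕ))
    (hpdec : ∀ j, ∀ τ ∈ ps j, PCW.IsBlock τ)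
    (hpconn : ∀ j, (ps j).Chain' fun a b => a = b ∨ (¬ PCW.sb a b ∧ ¬ PCW.sb b a))
    (S : Set ℕ) (a : Fin m → ℕ) :
    {π' : List (List ℕ) | PCW.Equiv π π' ∧ PCW.bDES π' = S
        ∧ ∀ j, PCW.occ (ps j) π' = a j}.ncard
      = {π' : List (List ℕ) | PCW.Equiv π π' ∧ PCW.bASC π' = S
        ∧ ∀ j, PCW.occ (ps j) π' = a j}.ncard := by
  have hocc : ∀ π', PCW.Equiv π π' → ∀ j, PCW.occ (ps j) π' = PCW.occ (ps j) π :=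
    fun π' h j => (PCW.occ_eq_of_equiv (fun τ hτ => (hpdec j τ hτ).1) (hpconn j) h).symm
  have hset : ∀ P : List (List ℕ) → Prop,
      {π' | PCW.Equiv π π' ∧ P π' ∧ ∀ j, PCW.occ (ps j) π' = a j}
        = {π' | PCW.Equiv π π' ∧ P π' ∧ ∀ j, PCW.occ (ps j) π = a j} :=
    fun P => Set.ext fun π' => and_congr_right fun h => by simp only [hocc π' h]
  rw [hset (PCW.bDES · = S), hset (PCW.bASC · = S)]
  by_cases ha : ∀ j, PCW.occ (ps j) π = a j
  · simpa only [ha, implies_true, and_true] using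
      PCW.ncard_bDES_eq_ncard_bASC (fun D hD => (hπ D hD).1) S
  · simp only [ha, and_false, Set.ofPred_false]
end

section
/- The patterns 1 2 4−3 and 4 2 1−3 are strongly Wilf-equivalent on permutations: for all n, k ≥ 0, the number of permutations of {1, …, n} with exactly k occurrences of the dashed pattern 124−3 equals the number with exactly k occurrences of 421−3. -/
/-- Number of occurrences of the dashed pattern `124-3` in the word `w`
(0-based positions): pairs `(i, j)` with `i + 2 < j < |w|` and
`w_i < w_{i+1} < w_j < w_{i+2}`. -/
noncomputable def occ124d3 (w : List ℕ) : ℕ :=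
  {ij : ℕ × ℕ | ∃ hlt : ij.1 + 2 < ij.2, ∃ hj : ij.2 < w.length,
    w[ij.1]'(by omega) < w[ij.1 + 1]'(by omega)
      ∧ w[ij.1 + 1]'(by omega) < w[ij.2]'hj
      ∧ w[ij.2]'hj < w[ij.1 + 2]'(by omega)}.ncard

/-- Number of occurrences of the dashed pattern `421-3` in the word `w`:
pairs `(i, j)` with `i + 2 < j < |w|` and `w_{i+2} < w_j < w_{i+1} < w_i`. -/
noncomputable def occ421d3 (w : List ℕ) : ℕ :=
  {ij : ℕ × ℕ | ∃ hlt : ij.1 + 2 < ij.2, ∃ hj : ij.2 < w.length,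
    w[ij.1 + 2]'(by omega) < w[ij.2]'hj
      ∧ w[ij.2]'hj < w[ij.1 + 1]'(by omega)
      ∧ w[ij.1 + 1]'(by omega) < w[ij.1]'(by omega)}.ncard

lemma map_compl_range' (n : ℕ) :
    (List.range' 1 n).map (fun x => n + 1 - x) = (List.range' 1 n).reverse := by
  apply List.ext_getElem
  · simp
  · intro i h1 h2
    simp only [List.getElem_map, List.getElem_reverse, List.getElem_range',
      List.length_range', List.length_map, List.length_reverse] at h1 h2 ⊢
    omega

lemma compl_perm {n : ℕ} {w : List ℕ} (h : w.Perm (List.range' 1 n)) :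
    (w.map (fun x => n + 1 - x)).Perm (List.range' 1 n) := by
  refine ((h.map _).trans ?_)
  rw [map_compl_range' n]
  exact (List.reverse_perm _)

lemma bound_of_perm {n : ℕ} {w : List ℕ} (h : w.Perm (List.range' 1 n))
    {i : ℕ} (hi : i < w.length) : 1 ≤ w[i] ∧ w[i] ≤ n := by
  have : w[i] ∈ List.range' 1 n := h.mem_iff.mp (List.getElem_mem hi)
  rw [List.mem_range'_1] at this
  omega

lemma occ_compl {n : ℕ} {w : List ℕ} (h : w.Perm (List.range' 1 n)) :
    occ421d3 (w.map (fun x => n + 1 - x)) = occ124d3 w := by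
  unfold occ421d3 occ124d3
  congr 1
  ext ⟨i, j⟩
  simp only [Set.mem_setOf_eq, List.length_map, List.getElem_map]
  constructor
  · rintro ⟨hlt, hj, h1, h2, h3⟩
    have b0 := bound_of_perm h (show i < w.length by omega)
    have b1 := bound_of_perm h (show i + 1 < w.length by omega)
    have b2 := bound_of_perm h (show i + 2 < w.length by omega)
    have bj := bound_of_perm h hj
    exact ⟨hlt, hj, by omega, by omega, by omega⟩
  · rintro ⟨hlt, hj, h1, h2, h3⟩
    have b0 := bound_of_perm h (show i < w.length by omega)
    have b1 := bound_of_perm h (show i + 1 < w.length by omega)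
    have b2 := bound_of_perm h (show i + 2 < w.length by omega)
    have bj := bound_of_perm h hj
    exact ⟨hlt, hj, by omega, by omega, by omega⟩

lemma mapComplCompl {n : ℕ} {w : List ℕ} (h : w.Perm (List.range' 1 n)) :
    (w.map (fun x => n + 1 - x)).map (fun x => n + 1 - x) = w := by
  rw [List.map_map]
  have : ∀ x ∈ w, ((fun x => n + 1 - x) ∘ fun x => n + 1 - x) x = id x := by
    intro x hx
    have : x ∈ List.range' 1 n := h.mem_iff.mp hx
    rw [List.mem_range'_1] at this
    simp only [Function.comp_apply, id_eq]
    omega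
  rw [List.map_congr_left this, List.map_id]

/-- The dashed patterns `124-3` and `421-3` are strongly Wilf-equivalent on
permutations (realized as words that are rearrangements of `1, 2, …, n`). -/
theorem stmt_11 (n k : ℕ) :
    {w : List ℕ | w.Perm (List.range' 1 n) ∧ occ124d3 w = k}.ncard
      = {w : List ℕ | w.Perm (List.range' 1 n) ∧ occ421d3 w = k}.ncard := by
  have himg : {w : List ℕ | w.Perm (List.range' 1 n) ∧ occ421d3 w = k}
      = (fun w => w.map (fun x => n + 1 - x)) ''
        {w : List ℕ | w.Perm (List.range' 1 n) ∧ occ124d3 w = k} := by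
    ext w
    simp only [Set.mem_setOf_eq, Set.mem_image]
    constructor
    · rintro ⟨hp, hk⟩
      refine ⟨w.map (fun x => n + 1 - x), ⟨compl_perm hp, ?_⟩, mapComplCompl hp⟩
      rw [← occ_compl (compl_perm hp), mapComplCompl hp, hk]
    · rintro ⟨v, ⟨hp, hk⟩, rfl⟩
      exact ⟨compl_perm hp, by rw [occ_compl hp, hk]⟩
  rw [himg, Set.ncard_image_of_injOn]
  intro a ha b hb hab
  have h1 := mapComplCompl ha.1
  have h2 := mapComplCompl hb.1
  simp only at hab
  rw [hab, h2] at h1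
  exact h1.symm
end

section
/- For all n, the joint distribution of the pair of pattern statistics ((3 1−2), (2−3 1)) over permutations of {1, …, n} is symmetric; that is, the number of permutations with exactly a occurrences of 31−2 and b occurrences of 2−31 equals the number with exactly b occurrences of 31−2 and a occurrences of 2−31. -/
/-- Number of occurrences of the dashed pattern `31-2` in the word `w`
(0-based positions): pairs `(i, j)` with `i + 1 < j < |w|` and
`w_{i+1} < w_j < w_i`. -/
noncomputable def occ31d2 (w : List ℕ) : ℕ :=
  {ij : ℕ × ℕ | ∃ hlt : ij.1 + 1 < ij.2, ∃ hj : ij.2 < w.length,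
    w[ij.1 + 1]'(by omega) < w[ij.2]'hj
      ∧ w[ij.2]'hj < w[ij.1]'(by omega)}.ncard

/-- Number of occurrences of the dashed pattern `2-31` in the word `w`:
pairs `(i, j)` with `i < j`, `j + 1 < |w|` and `w_{j+1} < w_i < w_j`. -/
noncomputable def occ2d31 (w : List ℕ) : ℕ :=
  {ij : ℕ × ℕ | ∃ hlt : ij.1 < ij.2, ∃ hj : ij.2 + 1 < w.length,
    w[ij.2 + 1]'hj < w[ij.1]'(by omega)
      ∧ w[ij.1]'(by omega) < w[ij.2]'(by omega)}.ncard

def rc (n : ℕ) (w : List ℕ) : List ℕ := (w.map (fun v => n + 1 - v)).reverse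

lemma rc_length (n : ℕ) (w : List ℕ) : (rc n w).length = w.length := by simp [rc]

lemma rc_getElem (n : ℕ) (w : List ℕ) (i : ℕ) (h : i < (rc n w).length) :
    (rc n w)[i] = n + 1 - w[w.length - 1 - i]'(by simp [rc] at h; omega) := by
  simp [rc, List.getElem_reverse, List.getElem_map]

lemma mem_bounds {n : ℕ} {w : List ℕ} (hw : w.Perm (List.range' 1 n)) :
    ∀ v ∈ w, 1 ≤ v ∧ v ≤ n := by
  intro v hv
  have := hw.mem_iff.mp hv
  rw [List.mem_range'_1] at this; omega

lemma getElem_eq (w : List ℕ) {i j : ℕ} (hi : i < w.length) (hj : j < w.length)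
    (h : i = j) : w[i] = w[j] := by subst h; rfl

lemma occ_swap {n : ℕ} {w : List ℕ} (hw : w.Perm (List.range' 1 n)) :
    occ31d2 (rc n w) = occ2d31 w := by
  have hb := mem_bounds hw
  have hset : {ij : ℕ × ℕ | ∃ hlt : ij.1 + 1 < ij.2, ∃ hj : ij.2 < (rc n w).length,
      (rc n w)[ij.1 + 1]'(by omega) < (rc n w)[ij.2]'hj
        ∧ (rc n w)[ij.2]'hj < (rc n w)[ij.1]'(by omega)}
      = (fun p : ℕ × ℕ => (w.length - 2 - p.2, w.length - 1 - p.1)) ''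
        {ij : ℕ × ℕ | ∃ hlt : ij.1 < ij.2, ∃ hj : ij.2 + 1 < w.length,
          w[ij.2 + 1]'hj < w[ij.1]'(by omega)
            ∧ w[ij.1]'(by omega) < w[ij.2]'(by omega)} := by
    ext ⟨i, j⟩
    simp only [Set.mem_setOf_eq, Set.mem_image, Prod.mk.injEq]
    constructor
    · rintro ⟨hlt, hj, h1, h2⟩
      rw [rc_length] at hj
      rw [rc_getElem, rc_getElem] at h1 h2
      refine ⟨(w.length - 1 - j, w.length - 2 - i), ⟨by omega, by omega, ?_, ?_⟩,
        by omega, by omega⟩ <;> dsimp only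
      · -- w[(w.length - 2 - i) + 1] < w[w.length - 1 - j]
        have E1 := getElem_eq w (show w.length - 2 - i + 1 < w.length by omega)
          (show w.length - 1 - i < w.length by omega) (by omega)
        have b1 := hb (w[w.length - 1 - (i + 1)]'(by omega)) (List.getElem_mem _)
        have b2 := hb (w[w.length - 1 - j]'(by omega)) (List.getElem_mem _)
        have b3 := hb (w[w.length - 1 - i]'(by omega)) (List.getElem_mem _)
        omega
      · -- w[w.length - 1 - j] < w[w.length - 2 - i]
        have E1 := getElem_eq w (show w.length - 1 - (i + 1) < w.length by omega)
          (show w.length - 2 - i < w.length by omega) (by omega)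
        have b1 := hb (w[w.length - 1 - (i + 1)]'(by omega)) (List.getElem_mem _)
        have b2 := hb (w[w.length - 1 - j]'(by omega)) (List.getElem_mem _)
        omega
    · rintro ⟨⟨p, q⟩, ⟨hlt, hj, h1, h2⟩, hi', hj'⟩
      dsimp only at hlt hj h1 h2 hi' hj'
      subst hi'; subst hj'
      refine ⟨by omega, by rw [rc_length]; omega, ?_, ?_⟩
      · rw [rc_getElem, rc_getElem]
        have E1 := getElem_eq w (show w.length - 1 - (w.length - 2 - q + 1) < w.length by omega)
          (show q < w.length by omega) (by omega)
        have E2 := getElem_eq w (show w.length - 1 - (w.length - 1 - p) < w.length by omega)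
          (show p < w.length by omega) (by omega)
        have b1 := hb (w[p]'(by omega)) (List.getElem_mem _)
        have b2 := hb (w[q]'(by omega)) (List.getElem_mem _)
        omega
      · rw [rc_getElem, rc_getElem]
        have E1 := getElem_eq w (show w.length - 1 - (w.length - 1 - p) < w.length by omega)
          (show p < w.length by omega) (by omega)
        have E2 := getElem_eq w (show w.length - 1 - (w.length - 2 - q) < w.length by omega)
          (show q + 1 < w.length by omega) (by omega)
        have b1 := hb (w[p]'(by omega)) (List.getElem_mem _)
        have b2 := hb (w[q + 1]'(by omega)) (List.getElem_mem _)
        omega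
  rw [occ31d2, occ2d31, hset, Set.ncard_image_of_injOn]
  rintro ⟨p, q⟩ ⟨hlt, hj, -⟩ ⟨p', q'⟩ ⟨hlt', hj', -⟩ h
  simp only [Prod.mk.injEq] at h ⊢
  omega

lemma rc_rc {n : ℕ} {w : List ℕ} (hb : ∀ v ∈ w, v ≤ n) : rc n (rc n w) = w := by
  unfold rc
  rw [List.map_reverse, List.reverse_reverse, List.map_map]
  conv_rhs => rw [← List.map_id w]
  apply List.map_congr_left
  intro v hv
  have := hb v hv
  simp; omega

lemma rc_perm {n : ℕ} {w : List ℕ} (hw : w.Perm (List.range' 1 n)) :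
    (rc n w).Perm (List.range' 1 n) := by
  have hb := mem_bounds hw
  have hnd : w.Nodup := hw.nodup_iff.mpr (List.nodup_range' (s := 1) (n := n))
  have hnd' : (rc n w).Nodup := by
    rw [rc, List.nodup_reverse]
    refine List.Nodup.map_on ?_ hnd
    intro x hx y hy hxy
    have := hb x hx; have := hb y hy; omega
  rw [List.perm_ext_iff_of_nodup hnd' (List.nodup_range' (s := 1) (n := n))]
  intro v
  simp only [rc, List.mem_reverse, List.mem_map, List.mem_range'_1]
  constructor
  · rintro ⟨u, hu, rfl⟩
    have := hb u hu; omega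
  · rintro ⟨h1, h2⟩
    refine ⟨n + 1 - v, ?_, by omega⟩
    rw [hw.mem_iff, List.mem_range'_1]; omega

lemma occ_swap' {n : ℕ} {w : List ℕ} (hw : w.Perm (List.range' 1 n)) :
    occ2d31 (rc n w) = occ31d2 w := by
  have h1 := occ_swap (rc_perm hw)
  rw [rc_rc (fun v hv => (mem_bounds hw v hv).2)] at h1
  exact h1.symm


/-- The joint distribution of the pattern statistics `(31-2, 2-31)` over the
permutations of `{1, …, n}` is symmetric. -/
theorem stmt_13 (n a b : ℕ) :
    {w : List ℕ | w.Perm (List.range' 1 n)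
        ∧ occ31d2 w = a ∧ occ2d31 w = b}.ncard
      = {w : List ℕ | w.Perm (List.range' 1 n)
        ∧ occ31d2 w = b ∧ occ2d31 w = a}.ncard := by
  have key : {w : List ℕ | w.Perm (List.range' 1 n) ∧ occ31d2 w = a ∧ occ2d31 w = b}
      = rc n '' {w : List ℕ | w.Perm (List.range' 1 n) ∧ occ31d2 w = b ∧ occ2d31 w = a} := by
    ext w
    simp only [Set.mem_setOf_eq, Set.mem_image]
    constructor
    · rintro ⟨hp, ha, hb⟩
      exact ⟨rc n w, ⟨rc_perm hp, by rw [occ_swap hp, hb], by rw [occ_swap' hp, ha]⟩,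
        rc_rc (fun v hv => (mem_bounds hp v hv).2)⟩
    · rintro ⟨v, ⟨hp, hvb, hva⟩, rfl⟩
      exact ⟨rc_perm hp, by rw [occ_swap hp, hva], by rw [occ_swap' hp, hvb]⟩
  rw [key, Set.ncard_image_of_injOn]
  intro x hx y hy hxy
  calc x = rc n (rc n x) := (rc_rc (fun v hv => (mem_bounds hx.1 v hv).2)).symm
    _ = rc n (rc n y) := by rw [hxy]
    _ = y := rc_rc (fun v hv => (mem_bounds hy.1 v hv).2)
end

section
/- For all n ≥ k ≥ 1, the 5-tuples of statistics (bDES, open, clos, rsb, lsb) and (bASC, open, clos, rsb, lsb) are equidistributed over the set OP_n^k of ordered set partitions of {1, …, n} into k blocks, where bDES and bASC denote the sets of block descents and block rises respectively. -/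
namespace OSP

/-- `π` is an ordered set partition of `{1, …, n}` into `k` blocks. -/
def isOP (n k : ℕ) (π : List (Finset ℕ)) : Prop :=
  π.length = k ∧ (∀ B ∈ π, B.Nonempty) ∧ π.Pairwise Disjoint
    ∧ ∀ x, (∃ B ∈ π, x ∈ B) ↔ x ∈ Finset.Icc 1 n

/-- Block descent set: positions `i`, `1 ≤ i ≤ k-1`, such that every element
of `B_{i+1}` is smaller than every element of `B_i`. -/
def bDesSet (π : List (Finset ℕ)) : Set ℕ :=
  {i | ∃ h : i < π.length, 0 < i ∧
    ∀ y ∈ π[i]'h, ∀ x ∈ π[i - 1]'(by omega), y < x}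

/-- Block rise set: positions `i`, `1 ≤ i ≤ k-1`, such that every element of
`B_i` is smaller than every element of `B_{i+1}`. -/
def bAscSet (π : List (Finset ℕ)) : Set ℕ :=
  {i | ∃ h : i < π.length, 0 < i ∧
    ∀ x ∈ π[i - 1]'(by omega), ∀ y ∈ π[i]'h, x < y}

/-- The set of openers (minima of the blocks) of `π`. -/
def openers (π : List (Finset ℕ)) : Set ℕ :=
  {x | ∃ B ∈ π, x ∈ B ∧ ∀ y ∈ B, x ≤ y}

/-- The set of closers (maxima of the blocks) of `π`. -/
def closers (π : List (Finset ℕ)) : Set ℕ :=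
  {x | ∃ B ∈ π, x ∈ B ∧ ∀ y ∈ B, y ≤ x}

open Classical in
/-- `rsb π = Σᵢ rsbᵢ π` where `rsbᵢ π` is the number of blocks strictly to the
right of the block containing `i` whose opener is `< i` and closer is `> i`. -/
noncomputable def rsb (n : ℕ) (π : List (Finset ℕ)) : ℕ :=
  ∑ i ∈ Finset.Icc 1 n, ((Finset.range π.length).filter fun j =>
    ∃ hj : j < π.length, (∃ t, ∃ ht : t < π.length, t < j ∧ i ∈ π[t]'ht)
      ∧ (∃ b ∈ π[j]'hj, b < i) ∧ (∃ b ∈ π[j]'hj, i < b)).card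

open Classical in
/-- `lsb π = Σᵢ lsbᵢ π` where `lsbᵢ π` is the number of blocks strictly to the
left of the block containing `i` whose opener is `< i` and closer is `> i`. -/
noncomputable def lsb (n : ℕ) (π : List (Finset ℕ)) : ℕ :=
  ∑ i ∈ Finset.Icc 1 n, ((Finset.range π.length).filter fun j =>
    ∃ hj : j < π.length, (∃ t, ∃ ht : t < π.length, j < t ∧ i ∈ π[t]'ht)
      ∧ (∃ b ∈ π[j]'hj, b < i) ∧ (∃ b ∈ π[j]'hj, i < b)).card

/-- `MAK π = rsb π + Σ_{c ∈ clos(π)} (n − c)`. -/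
noncomputable def MAK (n : ℕ) (π : List (Finset ℕ)) : ℕ :=
  rsb n π + (π.map fun B => n - B.sup id).sum

/-- `MAK' π = rsb π + Σ_{o ∈ open(π)} (o − 1)`. -/
noncomputable def MAK' (n : ℕ) (π : List (Finset ℕ)) : ℕ :=
  rsb n π + (π.map fun B => sInf (B : Set ℕ) - 1).sum

end OSP

/-!
Fix `T ⊆ {1, …, k - 1}` and cut the block positions into the maximal runs linked by `T`
(position `i` links blocks `i - 1` and `i`). Reversing the blocks inside every run is an involution
exchanging the partitions with `T ⊆ bDES` and those with `T ⊆ bASC`: a run of block descents is a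
decreasing chain of blocks and becomes a run of block rises. It only permutes the blocks, so `open`
and `clos` are kept; and a block straddling `i` is comparable with no block of its own run, so it
lies in another run than the block containing `i`; their left-right order, hence `rsb` and
`lsb`, is kept. So `#{π | T ⊆ bDES π}` and `#{π | T ⊆ bASC π}` agree on every fibre of
`(open, clos, rsb, lsb)` for every `T`, and Möbius inversion on the lattice of subsets turns this
into the equidistribution of `bDES` and `bASC`.
-/

open Finset in
theorem card_filter_eq_of_forall_card_filter_subset_eq {α β : Type*} [DecidableEq β]
    {X : Finset α} {f g : α → Finset β}
    (H : ∀ T, #{x ∈ X | T ⊆ f x} = #{x ∈ X | T ⊆ g x}) (S : Finset β) :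
    #{x ∈ X | f x = S} = #{x ∈ X | g x = S} := by
  set U := X.biUnion f ∪ X.biUnion g
  have hfU : ∀ x ∈ X, f x ⊆ U := fun x hx => subset_union_left.trans' (subset_biUnion_of_mem f hx)
  have hgU : ∀ x ∈ X, g x ⊆ U := fun x hx => subset_union_right.trans' (subset_biUnion_of_mem g hx)
  have fibres : ∀ h : α → Finset β, (∀ x ∈ X, h x ⊆ U) → ∀ S,
      #{x ∈ X | S ⊆ h x} = ∑ S' ∈ U.powerset with S ⊆ S', #{x ∈ X | h x = S'} := by
    intro h hU S
    rw [card_eq_sum_card_fiberwise (f := h) (t := {S' ∈ U.powerset | S ⊆ S'})]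
    · refine sum_congr rfl fun S' hS' => ?_
      rw [filter_filter]
      exact congrArg card (filter_congr fun x _ =>
        ⟨fun h => h.2, fun h' => ⟨h' ▸ (mem_filter.1 hS').2, h'⟩⟩)
    · intro x hx
      simp only [coe_filter, Set.mem_ofPred_eq, mem_powerset] at hx ⊢
      exact ⟨hU x hx.1, hx.2⟩
  by_cases hSU : S ⊆ U
  swap
  · rw [filter_false_of_mem, filter_false_of_mem]
    · exact fun x hx h => hSU (h ▸ hgU x hx)
    · exact fun x hx h => hSU (h ▸ hfU x hx)
  -- downward induction: by `H` and the induction hypothesis, the two sums of fibre sizes over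
  -- `S' ⊇ S` agree in total and in every term but `S' = S`
  refine Finset.strongDownwardInduction (n := #U)
    (p := fun S => S ⊆ U → #{x ∈ X | f x = S} = #{x ∈ X | g x = S})
    (fun S ih _ hSU => ?_) S (card_le_card hSU) hSU
  have hS : S ∈ {S' ∈ U.powerset | S ⊆ S'} := by simp [hSU]
  have hF := fibres f hfU S
  have hG := fibres g hgU S
  rw [← add_sum_erase _ _ hS] at hF hG
  have hrest : ∑ S' ∈ {S' ∈ U.powerset | S ⊆ S'}.erase S, #{x ∈ X | f x = S'}
      = ∑ S' ∈ {S' ∈ U.powerset | S ⊆ S'}.erase S, #{x ∈ X | g x = S'} := by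
    refine sum_congr rfl fun S' hS' => ?_
    simp only [mem_erase, mem_filter, mem_powerset] at hS'
    exact ih (card_le_card hS'.2.1) (ssubset_of_subset_of_ne hS'.2.2 (Ne.symm hS'.1)) hS'.2.1
  have := H S
  omega

namespace OSP

section Segments

variable {T : Finset ℕ} {i j j' m : ℕ}

/- A position `i ∈ T` links blocks `i - 1` and `i`; the maximal run of linked positions
through `j` is `[segStart T j, segEnd T j]`, and `segReflect T` reverses every run. -/
def segStart (T : Finset ℕ) (j : ℕ) : ℕ := Nat.findGreatest (· ∉ T) j

theorem exists_le_succ_notMem (T : Finset ℕ) (j : ℕ) : ∃ m, j ≤ m ∧ m + 1 ∉ T :=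
  ⟨j + T.sup id, Nat.le_add_right _ _, fun h => by
    have := Finset.le_sup (f := id) h
    simp only [id] at this; omega⟩

def segEnd (T : Finset ℕ) (j : ℕ) : ℕ := Nat.find (exists_le_succ_notMem T j)

def segReflect (T : Finset ℕ) (j : ℕ) : ℕ := segStart T j + segEnd T j - j

theorem segStart_le (j : ℕ) : segStart T j ≤ j := Nat.findGreatest_le j

theorem segStart_notMem (h0 : 0 ∉ T) (j : ℕ) : segStart T j ∉ T :=
  Nat.findGreatest_spec (P := (· ∉ T)) (Nat.zero_le j) h0

theorem le_segEnd (j : ℕ) : j ≤ segEnd T j := (Nat.find_spec (exists_le_succ_notMem T j)).1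

theorem segEnd_succ_notMem (j : ℕ) : segEnd T j + 1 ∉ T :=
  (Nat.find_spec (exists_le_succ_notMem T j)).2

theorem mem_of_segStart_lt (h1 : segStart T j < m) (h2 : m ≤ j) : m ∈ T := by
  by_contra h
  exact Nat.findGreatest_is_greatest h1 h2 h

theorem mem_of_lt_le_segEnd (h1 : segStart T j < m) (h2 : m ≤ segEnd T j) : m ∈ T := by
  rcases le_or_gt m j with h | h
  · exact mem_of_segStart_lt h1 h
  · by_contra hm
    exact Nat.find_min (exists_le_succ_notMem T j) (show m - 1 < segEnd T j by omega)
      ⟨by omega, by rwa [Nat.sub_add_cancel (by omega)]⟩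

theorem segStart_eq_of_mem_seg (h0 : 0 ∉ T) (h1 : segStart T j ≤ m) (h2 : m ≤ segEnd T j) :
    segStart T m = segStart T j := by
  refine le_antisymm ?_ (Nat.le_findGreatest h1 (segStart_notMem h0 j))
  by_contra! h
  exact segStart_notMem h0 m (mem_of_lt_le_segEnd h ((segStart_le m).trans h2))

theorem segEnd_eq_of_mem_seg (h1 : segStart T j ≤ m) (h2 : m ≤ segEnd T j) :
    segEnd T m = segEnd T j := by
  refine le_antisymm (Nat.find_le ⟨h2, segEnd_succ_notMem j⟩) ?_
  by_contra! h
  have := le_segEnd (T := T) m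
  exact segEnd_succ_notMem m (mem_of_lt_le_segEnd (T := T) (j := j) (by omega) (by omega))

theorem segStart_le_segReflect (j : ℕ) : segStart T j ≤ segReflect T j := by
  have := le_segEnd (T := T) j; unfold segReflect; omega

theorem segReflect_le_segEnd (j : ℕ) : segReflect T j ≤ segEnd T j := by
  have := segStart_le (T := T) j; unfold segReflect; omega

theorem segStart_segReflect (h0 : 0 ∉ T) (j : ℕ) : segStart T (segReflect T j) = segStart T j :=
  segStart_eq_of_mem_seg h0 (segStart_le_segReflect j) (segReflect_le_segEnd j)

theorem segEnd_segReflect (j : ℕ) : segEnd T (segReflect T j) = segEnd T j :=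
  segEnd_eq_of_mem_seg (segStart_le_segReflect j) (segReflect_le_segEnd j)

theorem segReflect_segReflect (h0 : 0 ∉ T) (j : ℕ) : segReflect T (segReflect T j) = j := by
  have := segStart_le (T := T) j
  have := le_segEnd (T := T) j
  have := segStart_segReflect h0 j
  have := segEnd_segReflect (T := T) j
  unfold segReflect at *
  omega

theorem segReflect_involutive (h0 : 0 ∉ T) : Function.Involutive (segReflect T) :=
  segReflect_segReflect h0

theorem segReflect_lt (hk : m ∉ T) (hj : j < m) : segReflect T j < m := by
  have := segStart_le (T := T) j
  have : segEnd T j ≤ m - 1 :=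
    Nat.find_le ⟨by omega, by rwa [Nat.sub_add_cancel (by omega)]⟩
  unfold segReflect; omega

theorem segReflect_lt_segReflect (h0 : 0 ∉ T) (hjj : j < j')
    (hne : segStart T j ≠ segStart T j') : segReflect T j < segReflect T j' := by
  have hmono : segStart T j ≤ segStart T j' := Nat.findGreatest_mono (fun _ h => h) hjj.le
  have hgap : segEnd T j < segStart T j' := by
    by_contra! h
    exact segStart_notMem h0 j' (mem_of_lt_le_segEnd (by omega) h)
  have := segReflect_le_segEnd (T := T) j
  have := segStart_le_segReflect (T := T) j'
  omega

theorem segReflect_lt_segReflect_iff (h0 : 0 ∉ T) (hne : segStart T j ≠ segStart T j') :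
    segReflect T j < segReflect T j' ↔ j < j' := by
  refine ⟨fun h => ?_, (segReflect_lt_segReflect h0 · hne)⟩
  by_contra! h'
  rcases h'.lt_or_eq with h' | rfl
  · exact (segReflect_lt_segReflect h0 h' hne.symm).not_gt h
  · exact hne rfl

theorem mem_of_segStart_eq (h : segStart T j = segStart T j') (h1 : j < m) (h2 : m ≤ j') :
    m ∈ T :=
  mem_of_segStart_lt (by have := segStart_le (T := T) j; omega) h2

theorem segReflect_pred_of_mem (h0 : 0 ∉ T) (hi : i ∈ T) :
    segReflect T (i - 1) = segReflect T i + 1 ∧ segReflect T i + 1 ∈ T := by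
  have hs := segStart_le (T := T) i
  have he := le_segEnd (T := T) i
  have hlt : segStart T i < i := lt_of_le_of_ne hs fun h => segStart_notMem h0 i (by rwa [h])
  have e1 := segStart_eq_of_mem_seg h0 (j := i) (m := i - 1) (by omega) (by omega)
  have e2 := segEnd_eq_of_mem_seg (T := T) (j := i) (m := i - 1) (by omega) (by omega)
  refine ⟨by unfold segReflect; rw [e1, e2]; omega, mem_of_lt_le_segEnd (j := i) ?_ ?_⟩
  · have := segStart_le_segReflect (T := T) i; omega
  · unfold segReflect; omega

end Segments

section Reverse

variable {α : Type*} {T : Finset ℕ} {R : α → α → Prop} {l : List α}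

def reverseSegments [Inhabited α] (T : Finset ℕ) (l : List α) : List α :=
  (List.range l.length).map fun j => l.getI (segReflect T j)

@[simp]
theorem length_reverseSegments [Inhabited α] : (reverseSegments T l).length = l.length := by
  simp [reverseSegments]

theorem getElem_reverseSegments [Inhabited α] (hk : l.length ∉ T) {j : ℕ}
    (hj : j < (reverseSegments T l).length) :
    (reverseSegments T l)[j] = l[segReflect T j]'(segReflect_lt hk (by simpa using hj)) := by
  simp [reverseSegments, List.getI_eq_getElem _ (segReflect_lt hk (by simpa using hj))]

open List in
theorem reverseSegments_perm [Inhabited α] (h0 : 0 ∉ T) (hk : l.length ∉ T) :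
    reverseSegments T l ~ l := by
  have hσ : (range l.length).map (segReflect T) ~ range l.length := by
    refine (perm_ext_iff_of_nodup
      (nodup_range.map (segReflect_involutive h0).injective) nodup_range).2 fun m => ?_
    simp only [mem_map, mem_range]
    exact ⟨fun ⟨j, hj, e⟩ => e ▸ segReflect_lt hk hj,
      fun hm => ⟨segReflect T m, segReflect_lt hk hm, segReflect_segReflect h0 m⟩⟩
  calc reverseSegments T l = ((range l.length).map (segReflect T)).map l.getI := by
        simp [reverseSegments]
    _ ~ (range l.length).map l.getI := hσ.map _
    _ = l := ext_getElem (by simp) fun j _ h => by simp [getI_eq_getElem _ h]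

theorem reverseSegments_reverseSegments [Inhabited α] (h0 : 0 ∉ T) (hk : l.length ∉ T) :
    reverseSegments T (reverseSegments T l) = l :=
  List.ext_getElem (by simp) fun j h1 h2 => by
    rw [getElem_reverseSegments (by simpa using hk), getElem_reverseSegments hk]
    simp only [segReflect_segReflect h0]

def adjacentSet (R : α → α → Prop) (l : List α) : Set ℕ :=
  {i | ∃ h : i < l.length, 0 < i ∧ R (l[i - 1]'(by omega)) (l[i]'h)}

theorem adjacentSet_subset_Ico : adjacentSet R l ⊆ Set.Ico 1 l.length :=
  fun _ ⟨h, hpos, _⟩ => ⟨hpos, h⟩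

theorem finite_adjacentSet (R : α → α → Prop) (l : List α) : (adjacentSet R l).Finite :=
  (Set.finite_Ico 1 l.length).subset adjacentSet_subset_Ico

theorem notMem_of_subset_adjacentSet (hT : ↑T ⊆ adjacentSet R l) : 0 ∉ T ∧ l.length ∉ T :=
  ⟨fun h => by simpa using (adjacentSet_subset_Ico (hT h)).1,
    fun h => by simpa using (adjacentSet_subset_Ico (hT h)).2⟩

theorem subset_adjacentSet_reverseSegments [Inhabited α] (hT : ↑T ⊆ adjacentSet R l) :
    ↑T ⊆ adjacentSet (flip R) (reverseSegments T l) := by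
  obtain ⟨h0, hk⟩ := notMem_of_subset_adjacentSet hT
  intro i hi
  obtain ⟨hil, hpos, -⟩ := hT hi
  obtain ⟨hpred, hlink⟩ := segReflect_pred_of_mem h0 hi
  obtain ⟨_, _, hR⟩ := hT hlink
  refine ⟨by simpa using hil, hpos, ?_⟩
  rw [getElem_reverseSegments hk, getElem_reverseSegments hk]
  simp only [flip, hpred, Nat.add_sub_cancel] at hR ⊢
  exact hR

theorem rel_of_forall_mem_adjacentSet (htrans : ∀ A B C, B ∈ l → R A B → R B C → R A C)
    {p q : ℕ} (hpq : p < q) (hq : q < l.length)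
    (h : ∀ m, p < m → m ≤ q → m ∈ adjacentSet R l) : R l[p] l[q] := by
  induction q, hpq using Nat.le_induction with
  | base => simpa using (h (p + 1) (by omega) le_rfl).2.2
  | succ q hpq ih =>
    have hR : R l[q] l[q + 1] := by simpa using (h (q + 1) (by omega) le_rfl).2.2
    exact htrans _ _ _ (List.getElem_mem _) (ih (by omega) fun m h1 h2 => h m h1 (by omega)) hR

end Reverse

section Blocks

variable {T : Finset ℕ} {π : List (Finset ℕ)} {n i : ℕ}

def BlockLT (A B : Finset ℕ) : Prop := ∀ x ∈ A, ∀ y ∈ B, x < y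

def Straddles (B : Finset ℕ) (i : ℕ) : Prop := (∃ b ∈ B, b < i) ∧ (∃ b ∈ B, i < b)

theorem bAscSet_eq_adjacentSet : bAscSet π = adjacentSet BlockLT π := rfl

theorem bDesSet_eq_adjacentSet : bDesSet π = adjacentSet (flip BlockLT) π := rfl

theorem BlockLT.trans {A B C : Finset ℕ} (hB : B.Nonempty) (hAB : BlockLT A B)
    (hBC : BlockLT B C) : BlockLT A C := by
  obtain ⟨b, hb⟩ := hB
  exact fun x hx y hy => (hAB x hx b hb).trans (hBC b hb y hy)

theorem not_straddles_of_blockLT {A B : Finset ℕ} (hi : i ∈ A) (h : BlockLT A B ∨ BlockLT B A) :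
    ¬Straddles B i := by
  rintro ⟨⟨b, hb, hbi⟩, ⟨c, hc, hic⟩⟩
  rcases h with h | h
  · exact (h i hi b hb).not_gt hbi
  · exact (h c hc i hi).not_gt hic

def SegmentsComparable (T : Finset ℕ) (π : List (Finset ℕ)) : Prop :=
  ∀ p q (hp : p < π.length) (hq : q < π.length), p < q → segStart T p = segStart T q →
    BlockLT π[p] π[q] ∨ BlockLT π[q] π[p]

theorem segmentsComparable_of_subset_adjacentSet {R : Finset ℕ → Finset ℕ → Prop}
    (hne : ∀ B ∈ π, B.Nonempty) (htrans : ∀ A B C, B.Nonempty → R A B → R B C → R A C)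
    (hR : ∀ A B, R A B → BlockLT A B ∨ BlockLT B A) (hT : ↑T ⊆ adjacentSet R π) :
    SegmentsComparable T π := fun _ _ _ hq hpq hseg =>
  hR _ _ <| rel_of_forall_mem_adjacentSet (fun A B C hB => htrans A B C (hne B hB)) hpq hq
    fun _ h1 h2 => hT (mem_of_segStart_eq hseg h1 h2)

theorem segStart_ne_of_straddles (hc : SegmentsComparable T π) {u v : ℕ} (hu : u < π.length)
    (hv : v < π.length) (huv : u ≠ v) (hi : i ∈ π[u]) (hs : Straddles π[v] i) :
    segStart T u ≠ segStart T v := by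
  intro hseg
  refine not_straddles_of_blockLT hi ?_ hs
  rcases huv.lt_or_gt with h | h
  · exact hc u v hu hv h hseg
  · exact (hc v u hv hu h hseg.symm).symm

def StraddlesAt (r : ℕ → ℕ → Prop) (π : List (Finset ℕ)) (i j : ℕ) : Prop :=
  ∃ hj : j < π.length, (∃ t, ∃ ht : t < π.length, r t j ∧ i ∈ π[t]'ht) ∧ Straddles (π[j]'hj) i

open Classical in
noncomputable def straddleCount (r : ℕ → ℕ → Prop) (n : ℕ) (π : List (Finset ℕ)) : ℕ :=
  ∑ i ∈ Finset.Icc 1 n, ((Finset.range π.length).filter (StraddlesAt r π i)).card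

theorem rsb_eq_straddleCount : rsb n π = straddleCount (· < ·) n π := by
  unfold rsb straddleCount StraddlesAt Straddles
  congr!

theorem lsb_eq_straddleCount : lsb n π = straddleCount (· > ·) n π := by
  unfold lsb straddleCount StraddlesAt Straddles
  congr!

end Blocks

section Reversal

variable {T : Finset ℕ} {π π' : List (Finset ℕ)} {n k : ℕ} {r : ℕ → ℕ → Prop}

theorem straddlesAt_reverseSegments_iff (h0 : 0 ∉ T) (hk : π.length ∉ T)
    (hc : SegmentsComparable T π) (hirr : ∀ t, ¬r t t)
    (hr : ∀ t j, segStart T t ≠ segStart T j → (r (segReflect T t) (segReflect T j) ↔ r t j))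
    (i j : ℕ) : StraddlesAt r (reverseSegments T π) i j ↔ StraddlesAt r π i (segReflect T j) := by
  constructor
  · rintro ⟨hj, ⟨t, ht, htj, hit⟩, hs⟩
    rw [getElem_reverseSegments hk] at hit hs
    have hσj := segReflect_lt hk (by simpa using hj)
    have hσt := segReflect_lt hk (by simpa using ht)
    have hne : segReflect T t ≠ segReflect T j :=
      (segReflect_involutive h0).injective.ne fun h => hirr t (h ▸ htj)
    have hseg := segStart_ne_of_straddles hc hσt hσj hne hit hs
    rw [segStart_segReflect h0, segStart_segReflect h0] at hseg
    exact ⟨hσj, ⟨_, hσt, (hr t j hseg).2 htj, hit⟩, hs⟩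
  · rintro ⟨hσj, ⟨t, ht, htj, hit⟩, hs⟩
    have hseg := segStart_ne_of_straddles hc ht hσj (fun h => hirr t (h ▸ htj)) hit hs
    have hj : j < π.length := segReflect_segReflect h0 j ▸ segReflect_lt hk hσj
    have hσt : segReflect T t < (reverseSegments T π).length := by
      simpa using segReflect_lt hk ht
    refine ⟨by simpa using hj, ⟨_, hσt, ?_, ?_⟩, ?_⟩
    · simpa only [segReflect_segReflect h0] using (hr t _ hseg).2 htj
    · rw [getElem_reverseSegments hk]
      simpa only [segReflect_segReflect h0] using hit
    · rwa [getElem_reverseSegments hk]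

theorem straddleCount_reverseSegments (h0 : 0 ∉ T) (hk : π.length ∉ T)
    (hc : SegmentsComparable T π) (hirr : ∀ t, ¬r t t)
    (hr : ∀ t j, segStart T t ≠ segStart T j → (r (segReflect T t) (segReflect T j) ↔ r t j)) :
    straddleCount r n (reverseSegments T π) = straddleCount r n π := by
  unfold straddleCount
  rw [length_reverseSegments]
  refine Finset.sum_congr rfl fun i _ => Finset.card_nbij' (segReflect T) (segReflect T) ?_ ?_
    (fun j _ => segReflect_segReflect h0 j) (fun j _ => segReflect_segReflect h0 j)
  · intro j hj
    simp only [Finset.coe_filter, Finset.mem_range, Set.mem_ofPred_eq] at hj ⊢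
    have h := (straddlesAt_reverseSegments_iff h0 hk hc hirr hr i j).1 hj.2
    exact ⟨h.1, h⟩
  · intro j hj
    simp only [Finset.coe_filter, Finset.mem_range, Set.mem_ofPred_eq] at hj ⊢
    have h := (straddlesAt_reverseSegments_iff h0 hk hc hirr hr i (segReflect T j)).2
      (by rw [segReflect_segReflect h0]; exact hj.2)
    exact ⟨segReflect_lt hk hj.1, h⟩

theorem isOP_of_perm (h : π'.Perm π) (hπ : isOP n k π) : isOP n k π' := by
  obtain ⟨hlen, hne, hdisj, hcov⟩ := hπ
  refine ⟨h.length_eq ▸ hlen, fun B hB => hne B (h.mem_iff.1 hB),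
    (h.pairwise_iff fun hd => hd.symm).2 hdisj, fun x => ?_⟩
  simpa only [h.mem_iff] using hcov x

theorem openers_eq_of_perm (h : π'.Perm π) : openers π' = openers π := by
  simp only [openers, h.mem_iff]

theorem closers_eq_of_perm (h : π'.Perm π) : closers π' = closers π := by
  simp only [closers, h.mem_iff]

def statFiber (n k : ℕ) (O C : Set ℕ) (a b : ℕ) : Set (List (Finset ℕ)) :=
  {π | isOP n k π ∧ openers π = O ∧ closers π = C ∧ rsb n π = a ∧ lsb n π = b}

theorem finite_statFiber (n k : ℕ) (O C : Set ℕ) (a b : ℕ) :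
    (statFiber n k O C a b).Finite := by
  refine ((List.finite_length_eq (Set.Iic (Finset.Icc 1 n)) k).image
    (List.map Subtype.val)).subset ?_
  rintro π ⟨⟨hlen, -, -, hcov⟩, -⟩
  have hsub : ∀ B ∈ π, B ∈ Set.Iic (Finset.Icc 1 n) := fun B hB x hx => (hcov x).1 ⟨B, hB, hx⟩
  lift π to List (Set.Iic (Finset.Icc 1 n)) using hsub
  exact ⟨π, by simpa using hlen, rfl⟩

theorem reverseSegments_mem_statFiber {O C : Set ℕ} {a b : ℕ} {R : Finset ℕ → Finset ℕ → Prop}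
    (htrans : ∀ A B C, B.Nonempty → R A B → R B C → R A C)
    (hR : ∀ A B, R A B → BlockLT A B ∨ BlockLT B A)
    (hπ : π ∈ statFiber n k O C a b) (hT : ↑T ⊆ adjacentSet R π) :
    reverseSegments T π ∈ statFiber n k O C a b := by
  obtain ⟨hop, hO, hC, ha, hb⟩ := hπ
  obtain ⟨h0, hk⟩ := notMem_of_subset_adjacentSet hT
  have hc := segmentsComparable_of_subset_adjacentSet hop.2.1 htrans hR hT
  have hperm := reverseSegments_perm h0 hk
  refine ⟨isOP_of_perm hperm hop, (openers_eq_of_perm hperm).trans hO,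
    (closers_eq_of_perm hperm).trans hC, ?_, ?_⟩
  · rw [rsb_eq_straddleCount, straddleCount_reverseSegments h0 hk hc (fun t => lt_irrefl t)
      fun _ _ h => segReflect_lt_segReflect_iff h0 h, ← rsb_eq_straddleCount, ha]
  · rw [lsb_eq_straddleCount, straddleCount_reverseSegments (r := (· > ·)) h0 hk hc
      (fun t => lt_irrefl t) fun _ _ h => segReflect_lt_segReflect_iff h0 h.symm,
      ← lsb_eq_straddleCount, hb]

theorem ncard_subset_bDesSet_eq_ncard_subset_bAscSet (n k : ℕ) (O C : Set ℕ) (a b : ℕ)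
    (T : Finset ℕ) :
    {π ∈ statFiber n k O C a b | ↑T ⊆ bDesSet π}.ncard
      = {π ∈ statFiber n k O C a b | ↑T ⊆ bAscSet π}.ncard := by
  have hinv : ∀ {R : Finset ℕ → Finset ℕ → Prop} {π : List (Finset ℕ)}, ↑T ⊆ adjacentSet R π →
      reverseSegments T (reverseSegments T π) = π := fun hT =>
    reverseSegments_reverseSegments (notMem_of_subset_adjacentSet hT).1
      (notMem_of_subset_adjacentSet hT).2
  refine Set.BijOn.ncard_eq (f := reverseSegments T) (Set.InvOn.bijOn
    ⟨fun _ hπ => hinv (R := flip BlockLT) hπ.2, fun _ hπ => hinv (R := BlockLT) hπ.2⟩ ?_ ?_)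
  · rintro π ⟨hπ, hT⟩
    exact ⟨reverseSegments_mem_statFiber (R := flip BlockLT)
      (fun _ _ _ hB hAB hBC => hBC.trans hB hAB) (fun _ _ => Or.inr) hπ hT,
      subset_adjacentSet_reverseSegments (R := flip BlockLT) hT⟩
  · rintro π ⟨hπ, hT⟩
    exact ⟨reverseSegments_mem_statFiber (R := BlockLT) (fun _ _ _ hB => BlockLT.trans hB)
      (fun _ _ => Or.inl) hπ hT, subset_adjacentSet_reverseSegments (R := BlockLT) hT⟩

end Reversal

end OSP

theorem stmt_15_general (n k : ℕ) (S O C : Set ℕ) (a b : ℕ) :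
    {π : List (Finset ℕ) | OSP.isOP n k π ∧ OSP.bDesSet π = S
        ∧ OSP.openers π = O ∧ OSP.closers π = C
        ∧ OSP.rsb n π = a ∧ OSP.lsb n π = b}.ncard
      = {π : List (Finset ℕ) | OSP.isOP n k π ∧ OSP.bAscSet π = S
        ∧ OSP.openers π = O ∧ OSP.closers π = C
        ∧ OSP.rsb n π = a ∧ OSP.lsb n π = b}.ncard := by
  classical
  obtain ⟨X, hX⟩ := (OSP.finite_statFiber n k O C a b).exists_finset_coe
  let des π := (OSP.finite_adjacentSet (flip OSP.BlockLT) π).toFinset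
  let asc π := (OSP.finite_adjacentSet OSP.BlockLT π).toFinset
  have hsub : ∀ T, (X.filter (T ⊆ des ·)).card = (X.filter (T ⊆ asc ·)).card := by
    intro T
    have := OSP.ncard_subset_bDesSet_eq_ncard_subset_bAscSet n k O C a b T
    rw [← hX] at this
    rw [← Set.ncard_coe_finset, ← Set.ncard_coe_finset, Finset.coe_filter, Finset.coe_filter]
    simpa [des, asc, OSP.bDesSet_eq_adjacentSet, OSP.bAscSet_eq_adjacentSet] using this
  by_cases hS : S.Finite
  · lift S to Finset ℕ using hS
    have := card_filter_eq_of_forall_card_filter_subset_eq hsub S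
    rw [← Set.ncard_coe_finset, ← Set.ncard_coe_finset, Finset.coe_filter,
      Finset.coe_filter] at this
    have hXmem : ∀ π, π ∈ X ↔ π ∈ OSP.statFiber n k O C a b := fun π => by
      rw [← Finset.mem_coe, hX]
    convert this using 2 <;> ext π <;>
      simp only [Set.mem_ofPred_eq, hXmem, OSP.statFiber, des, asc, ← Finset.coe_inj,
        Set.Finite.coe_toFinset, OSP.bDesSet_eq_adjacentSet, OSP.bAscSet_eq_adjacentSet] <;>
      tauto
  · have hdes : ∀ π, OSP.bDesSet π ≠ S := fun π h =>
      hS (h ▸ OSP.finite_adjacentSet (flip OSP.BlockLT) π)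
    have hasc : ∀ π, OSP.bAscSet π ≠ S := fun π h =>
      hS (h ▸ OSP.finite_adjacentSet OSP.BlockLT π)
    simp only [hdes, hasc, false_and, and_false, Set.ofPred_false]

/-- The 5-tuples of statistics `(bDES, open, clos, rsb, lsb)` and
`(bASC, open, clos, rsb, lsb)` are equidistributed over the ordered set
partitions of `{1, …, n}` into `k` blocks. -/
theorem stmt_15 (n k : ℕ) (h1 : 1 ≤ k) (h2 : k ≤ n) (S O C : Set ℕ) (a b : ℕ) :
    {π : List (Finset ℕ) | OSP.isOP n k π ∧ OSP.bDesSet π = S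
        ∧ OSP.openers π = O ∧ OSP.closers π = C
        ∧ OSP.rsb n π = a ∧ OSP.lsb n π = b}.ncard
      = {π : List (Finset ℕ) | OSP.isOP n k π ∧ OSP.bAscSet π = S
        ∧ OSP.openers π = O ∧ OSP.closers π = C
        ∧ OSP.rsb n π = a ∧ OSP.lsb n π = b}.ncard :=
  stmt_15_general n k S O C a b
end

section
/- The complement map c on ordered set partitions of {1, …, n}, which replaces every element i by n+1−i in every block (keeping the block order), is an involution on OP_n^k that sends the triple of statistics (MAK, MAK', bASC) to (MAK', MAK, bDES): MAK(c π) = MAK'(π), MAK'(c π) = MAK(π), and |bDES(c π)| = |bASC(π)|. -/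
/-- The complement map: replace every element `i` of every block by
`n + 1 - i`, keeping the order of the blocks. -/
def OSP.cmap (n : ℕ) (π : List (Finset ℕ)) : List (Finset ℕ) :=
  π.map fun B => B.image fun x => n + 1 - x


namespace OSP

variable {n k : ℕ} {π : List (Finset ℕ)}

lemma rng_of_isOP (h : isOP n k π) : ∀ B ∈ π, ∀ x ∈ B, 1 ≤ x ∧ x ≤ n := by
  intro B hB x hx
  have := (h.2.2.2 x).mp ⟨B, hB, hx⟩
  simpa [Finset.mem_Icc] using this

lemma image_image_compl {B : Finset ℕ} (hB : ∀ x ∈ B, 1 ≤ x ∧ x ≤ n) :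
    (B.image (fun x => n + 1 - x)).image (fun x => n + 1 - x) = B := by
  ext y
  simp only [Finset.mem_image]
  constructor
  · rintro ⟨x, ⟨z, hz, rfl⟩, rfl⟩
    have := hB z hz
    have hzz : n + 1 - (n + 1 - z) = z := by omega
    rwa [hzz]
  · intro hy
    have := hB y hy
    exact ⟨n + 1 - y, ⟨y, hy, rfl⟩, by omega⟩

lemma compl_mem_image {B : Finset ℕ} (hB : ∀ x ∈ B, 1 ≤ x ∧ x ≤ n) {i : ℕ}
    (hi : 1 ≤ i) (hi' : i ≤ n) :
    i ∈ B.image (fun x => n + 1 - x) ↔ (n + 1 - i) ∈ B := by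
  simp only [Finset.mem_image]
  constructor
  · rintro ⟨b, hb, hbe⟩
    have := hB b hb
    have hbi : b = n + 1 - i := by omega
    rwa [← hbi]
  · intro hm
    have := hB _ hm
    exact ⟨n + 1 - i, hm, by omega⟩

lemma exists_lt_image {B : Finset ℕ} (hB : ∀ x ∈ B, 1 ≤ x ∧ x ≤ n) {i : ℕ}
    (hi : 1 ≤ i) (hi' : i ≤ n) :
    (∃ b ∈ B.image (fun x => n + 1 - x), b < i) ↔ ∃ b ∈ B, n + 1 - i < b := by
  simp only [Finset.mem_image]
  constructor
  · rintro ⟨b, ⟨a, ha, rfl⟩, hlt⟩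
    have := hB a ha
    exact ⟨a, ha, by omega⟩
  · rintro ⟨a, ha, hlt⟩
    have := hB a ha
    exact ⟨n + 1 - a, ⟨a, ha, rfl⟩, by omega⟩

lemma exists_gt_image {B : Finset ℕ} (hB : ∀ x ∈ B, 1 ≤ x ∧ x ≤ n) {i : ℕ}
    (hi : 1 ≤ i) (hi' : i ≤ n) :
    (∃ b ∈ B.image (fun x => n + 1 - x), i < b) ↔ ∃ b ∈ B, b < n + 1 - i := by
  simp only [Finset.mem_image]
  constructor
  · rintro ⟨b, ⟨a, ha, rfl⟩, hlt⟩
    have := hB a ha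
    exact ⟨a, ha, by omega⟩
  · rintro ⟨a, ha, hlt⟩
    have := hB a ha
    exact ⟨n + 1 - a, ⟨a, ha, rfl⟩, by omega⟩

lemma sup_eq_max' {B : Finset ℕ} (hne : B.Nonempty) : B.sup id = B.max' hne := by
  refine le_antisymm (Finset.sup_le fun b hb => Finset.le_max' B b hb) ?_
  exact Finset.le_sup (f := id) (Finset.max'_mem B hne)

lemma sup_mem {B : Finset ℕ} (hne : B.Nonempty) : B.sup id ∈ B := by
  rw [sup_eq_max' hne]; exact Finset.max'_mem B hne

lemma sInf_mem_finset {B : Finset ℕ} (hne : B.Nonempty) : sInf (B : Set ℕ) ∈ B := by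
  have := Nat.sInf_mem (Finset.coe_nonempty.mpr hne)
  exact_mod_cast this

lemma sup_image_compl {B : Finset ℕ} (hB : ∀ x ∈ B, 1 ≤ x ∧ x ≤ n) (hne : B.Nonempty) :
    (B.image (fun x => n + 1 - x)).sup id = n + 1 - sInf (B : Set ℕ) := by
  have hmem : sInf (B : Set ℕ) ∈ B := sInf_mem_finset hne
  refine le_antisymm (Finset.sup_le ?_) ?_
  · intro y hy
    simp only [Finset.mem_image] at hy
    obtain ⟨a, ha, rfl⟩ := hy
    have h1 : sInf (B : Set ℕ) ≤ a := Nat.sInf_le (Finset.mem_coe.mpr ha)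
    simp only [id_eq]
    omega
  · exact Finset.le_sup (f := id) (Finset.mem_image_of_mem _ hmem)

lemma sInf_image_compl {B : Finset ℕ} (hB : ∀ x ∈ B, 1 ≤ x ∧ x ≤ n) (hne : B.Nonempty) :
    sInf ((B.image (fun x => n + 1 - x) : Finset ℕ) : Set ℕ) = n + 1 - B.sup id := by
  have hM : B.sup id ∈ B := sup_mem hne
  refine le_antisymm (Nat.sInf_le (Finset.mem_coe.mpr (Finset.mem_image_of_mem _ hM))) ?_
  refine le_csInf (Finset.coe_nonempty.mpr (hne.image _)) ?_
  intro b hb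
  simp only [Finset.coe_image, Set.mem_image, Finset.mem_coe] at hb
  obtain ⟨a, ha, rfl⟩ := hb
  have : a ≤ B.sup id := Finset.le_sup (f := id) ha
  omega

lemma cmap_cmap' (hrng : ∀ B ∈ π, ∀ x ∈ B, 1 ≤ x ∧ x ≤ n) :
    cmap n (cmap n π) = π := by
  unfold cmap
  rw [List.map_map]
  conv_rhs => rw [← List.map_id π]
  refine List.map_congr_left fun B hB => ?_
  simpa using image_image_compl (hrng B hB)

lemma isOP_cmap (h : isOP n k π) : isOP n k (cmap n π) := by
  have hrng := rng_of_isOP h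
  refine ⟨by simp [cmap, h.1], ?_, ?_, ?_⟩
  · intro B hB
    simp only [cmap, List.mem_map] at hB
    obtain ⟨C, hC, rfl⟩ := hB
    exact (h.2.1 C hC).image _
  · unfold cmap
    rw [List.pairwise_map]
    refine (h.2.2.1).imp_of_mem ?_
    intro B C hB hC hd
    rw [Finset.disjoint_left]
    rintro x hx hx'
    simp only [Finset.mem_image] at hx hx'
    obtain ⟨b, hb, rfl⟩ := hx
    obtain ⟨c, hc, hce⟩ := hx'
    have h1 := hrng B hB b hb
    have h2 := hrng C hC c hc
    have : c = b := by omega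
    subst this
    exact (Finset.disjoint_left.mp hd hb) hc
  · intro x
    constructor
    · rintro ⟨B, hB, hx⟩
      simp only [cmap, List.mem_map] at hB
      obtain ⟨C, hC, rfl⟩ := hB
      simp only [Finset.mem_image] at hx
      obtain ⟨b, hb, rfl⟩ := hx
      have := hrng C hC b hb
      simp only [Finset.mem_Icc]
      omega
    · intro hx
      simp only [Finset.mem_Icc] at hx
      have hx' : n + 1 - x ∈ Finset.Icc 1 n := by simp only [Finset.mem_Icc]; omega
      obtain ⟨B, hB, hm⟩ := (h.2.2.2 (n + 1 - x)).mpr hx'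
      refine ⟨B.image (fun y => n + 1 - y), ?_, ?_⟩
      · simp only [cmap, List.mem_map]; exact ⟨B, hB, rfl⟩
      · have : n + 1 - (n + 1 - x) = x := by omega
        exact this ▸ Finset.mem_image_of_mem _ hm

open Classical in
lemma rsb_cmap (hrng : ∀ B ∈ π, ∀ x ∈ B, 1 ≤ x ∧ x ≤ n) :
    rsb n (cmap n π) = rsb n π := by
  unfold rsb
  refine Finset.sum_nbij' (i := fun i => n + 1 - i) (j := fun i => n + 1 - i)
    ?_ ?_ ?_ ?_ ?_
  · intro a ha; simp only [Finset.mem_Icc] at *; omega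
  · intro a ha; simp only [Finset.mem_Icc] at *; omega
  · intro a ha; simp only [Finset.mem_Icc] at ha
    show n + 1 - (n + 1 - a) = a; omega
  · intro a ha; simp only [Finset.mem_Icc] at ha
    show n + 1 - (n + 1 - a) = a; omega
  · intro i hi
    simp only [Finset.mem_Icc] at hi
    obtain ⟨h1, h2⟩ := hi
    simp only [cmap, List.length_map, List.getElem_map]
    congr 1
    refine Finset.filter_congr fun j hj => ?_
    simp only [Finset.mem_range] at hj
    constructor
    · rintro ⟨hjl, ⟨t, ht, htj, hmem⟩, hlt, hgt⟩
      refine ⟨hjl, ⟨t, ht, htj, ?_⟩, ?_, ?_⟩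
      · exact (compl_mem_image (hrng _ (π.getElem_mem ht)) h1 h2).mp hmem
      · exact (exists_gt_image (hrng _ (π.getElem_mem hjl)) h1 h2).mp hgt
      · exact (exists_lt_image (hrng _ (π.getElem_mem hjl)) h1 h2).mp hlt
    · rintro ⟨hjl, ⟨t, ht, htj, hmem⟩, hlt, hgt⟩
      refine ⟨hjl, ⟨t, ht, htj, ?_⟩, ?_, ?_⟩
      · exact (compl_mem_image (hrng _ (π.getElem_mem ht)) h1 h2).mpr hmem
      · exact (exists_lt_image (hrng _ (π.getElem_mem hjl)) h1 h2).mpr hgt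
      · exact (exists_gt_image (hrng _ (π.getElem_mem hjl)) h1 h2).mpr hlt

lemma closer_sum_cmap (hrng : ∀ B ∈ π, ∀ x ∈ B, 1 ≤ x ∧ x ≤ n)
    (hne : ∀ B ∈ π, B.Nonempty) :
    ((cmap n π).map fun B => n - B.sup id).sum
      = (π.map fun B : Finset ℕ => sInf (B : Set ℕ) - 1).sum := by
  unfold cmap
  rw [List.map_map]
  congr 1
  refine List.map_congr_left fun B hB => ?_
  simp only [Function.comp_apply]
  rw [sup_image_compl (hrng B hB) (hne B hB)]
  have hm : sInf (B : Set ℕ) ∈ B := sInf_mem_finset (hne B hB)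
  have := hrng B hB _ hm
  omega

lemma opener_sum_cmap (hrng : ∀ B ∈ π, ∀ x ∈ B, 1 ≤ x ∧ x ≤ n)
    (hne : ∀ B ∈ π, B.Nonempty) :
    ((cmap n π).map fun B : Finset ℕ => sInf (B : Set ℕ) - 1).sum
      = (π.map fun B => n - B.sup id).sum := by
  unfold cmap
  rw [List.map_map]
  congr 1
  refine List.map_congr_left fun B hB => ?_
  simp only [Function.comp_apply]
  rw [sInf_image_compl (hrng B hB) (hne B hB)]
  have hM : B.sup id ∈ B := sup_mem (hne B hB)
  have := hrng B hB _ hM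
  omega

lemma MAK'_eq (n : ℕ) (π : List (Finset ℕ)) :
    MAK' n π = rsb n π + (π.map fun B : Finset ℕ => sInf (B : Set ℕ) - 1).sum := by
  unfold MAK'
  congr 1
  have hdo : (do let a ← π; pure ((a : Set ℕ))) = π.map (fun B : Finset ℕ => (B : Set ℕ)) := by
    induction π with
    | nil => rfl
    | cons a l ih => simp_all [List.flatMap_cons]
  rw [hdo, List.map_map]
  rfl

lemma bDesSet_cmap (hrng : ∀ B ∈ π, ∀ x ∈ B, 1 ≤ x ∧ x ≤ n) :
    bDesSet (cmap n π) = bAscSet π := by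
  ext i
  simp only [bDesSet, bAscSet, Set.mem_setOf_eq, cmap, List.length_map, List.getElem_map]
  constructor
  · rintro ⟨hl, hi, hlt⟩
    refine ⟨hl, hi, fun x hx y hy => ?_⟩
    have hx' := hrng _ (π.getElem_mem (by omega : i - 1 < π.length)) x hx
    have hy' := hrng _ (π.getElem_mem hl) y hy
    have := hlt (n + 1 - y) (Finset.mem_image_of_mem _ hy)
      (n + 1 - x) (Finset.mem_image_of_mem _ hx)
    omega
  · rintro ⟨hl, hi, hlt⟩
    refine ⟨hl, hi, ?_⟩
    rintro y hy x hx
    simp only [Finset.mem_image] at hy hx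
    obtain ⟨b, hb, rfl⟩ := hy
    obtain ⟨a, ha, rfl⟩ := hx
    have hb' := hrng _ (π.getElem_mem hl) b hb
    have ha' := hrng _ (π.getElem_mem (by omega : i - 1 < π.length)) a ha
    have := hlt a ha b hb
    omega

end OSP

/-- The complement map is an involution on `OP_n^k` sending the statistics
`(MAK, MAK', |bASC|)` to `(MAK', MAK, |bDES|)`. -/
theorem stmt_16 (n k : ℕ) (π : List (Finset ℕ)) (h : OSP.isOP n k π) :
    OSP.cmap n (OSP.cmap n π) = π
      ∧ OSP.isOP n k (OSP.cmap n π)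
      ∧ OSP.MAK n (OSP.cmap n π) = OSP.MAK' n π
      ∧ OSP.MAK' n (OSP.cmap n π) = OSP.MAK n π
      ∧ (OSP.bDesSet (OSP.cmap n π)).ncard = (OSP.bAscSet π).ncard := by
  have hrng := OSP.rng_of_isOP h
  have hne := h.2.1
  refine ⟨OSP.cmap_cmap' hrng, OSP.isOP_cmap h, ?_, ?_, ?_⟩
  · unfold OSP.MAK
    rw [OSP.MAK'_eq, OSP.rsb_cmap hrng, OSP.closer_sum_cmap hrng hne]
  · unfold OSP.MAK
    rw [OSP.MAK'_eq, OSP.rsb_cmap hrng, OSP.opener_sum_cmap hrng hne]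
  · rw [OSP.bDesSet_cmap hrng]
end

section
/- For any ordered set partition π of {1, …, n}, rsb(π) equals the number of occurrences of the dashed pattern 2−31 in π, and lsb(π) equals the number of occurrences of 31−2 in π, where patterns in ordered set partitions are counted as follows: an occurrence of 2−31 is a pair (i, and a pair of adjacent elements a > b within a single block strictly to the right of the block of i) with b < i < a; an occurrence of 31−2 is a pair of adjacent elements a > b in some block together with an element i in a strictly later block with b < i < a. Blocks are written in decreasing order. -/
/-- Number of occurrences of the dashed pattern `2-31` in an ordered set
partition `π`: quadruples `(i, j, a, b)` where `i` lies in some block strictly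
to the left of block `j`, and `a > b` are adjacent elements of block `j` (no
element of block `j` lies strictly between them, blocks being written in
decreasing order), with `b < i < a`. -/
noncomputable def OSP.occ2d31 (π : List (Finset ℕ)) : ℕ :=
  {q : ℕ × ℕ × ℕ × ℕ | ∃ hj : q.2.1 < π.length,
    (∃ t, ∃ ht : t < π.length, t < q.2.1 ∧ q.1 ∈ π[t]'ht)
      ∧ q.2.2.1 ∈ π[q.2.1]'hj ∧ q.2.2.2 ∈ π[q.2.1]'hj
      ∧ q.2.2.2 < q.1 ∧ q.1 < q.2.2.1
      ∧ ∀ c ∈ π[q.2.1]'hj, ¬(q.2.2.2 < c ∧ c < q.2.2.1)}.ncard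

/-- Number of occurrences of the dashed pattern `31-2` in an ordered set
partition `π`: quadruples `(i, j, a, b)` where `a > b` are adjacent elements of
block `j` and `i` lies in some block strictly to the right of block `j`, with
`b < i < a`. -/
noncomputable def OSP.occ31d2 (π : List (Finset ℕ)) : ℕ :=
  {q : ℕ × ℕ × ℕ × ℕ | ∃ hj : q.2.1 < π.length,
    (∃ t, ∃ ht : t < π.length, q.2.1 < t ∧ q.1 ∈ π[t]'ht)
      ∧ q.2.2.1 ∈ π[q.2.1]'hj ∧ q.2.2.2 ∈ π[q.2.1]'hj
      ∧ q.2.2.2 < q.1 ∧ q.1 < q.2.2.1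
      ∧ ∀ c ∈ π[q.2.1]'hj, ¬(q.2.2.2 < c ∧ c < q.2.2.1)}.ncard

/-!
Fix `i` and a block `B` not containing `i`. If `B` has elements on both sides of `i`, then
exactly one pair `a > b` of consecutive elements of `B` satisfies `b < i < a`, namely the
least element of `B` above `i` and the greatest one below it; otherwise there is none.
Hence `(i, j, a, b) ↦ (i, j)` is a bijection from the occurrences of `2-31` (resp. `31-2`)
onto the pairs counted by `rsb` (resp. `lsb`).
-/

namespace OSP

section GapAround

variable {α : Type*} [LinearOrder α]

def IsGapAround (B : Finset α) (i a b : α) : Prop :=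
  a ∈ B ∧ b ∈ B ∧ b < i ∧ i < a ∧ ∀ c ∈ B, ¬(b < c ∧ c < a)

theorem IsGapAround.unique {B : Finset α} {i a b a' b' : α} (h : IsGapAround B i a b)
    (h' : IsGapAround B i a' b') : a = a' ∧ b = b' := by
  obtain ⟨ha, hb, hbi, hia, hgap⟩ := h
  obtain ⟨ha', hb', hbi', hia', hgap'⟩ := h'
  refine ⟨le_antisymm ?_ ?_, le_antisymm ?_ ?_⟩
  · exact not_lt.mp fun h => hgap a' ha' ⟨hbi.trans hia', h⟩
  · exact not_lt.mp fun h => hgap' a ha ⟨hbi'.trans hia, h⟩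
  · exact not_lt.mp fun h => hgap' b hb ⟨h, hbi.trans hia'⟩
  · exact not_lt.mp fun h => hgap b' hb' ⟨h, hbi'.trans hia⟩

theorem exists_isGapAround {B : Finset α} {i : α} (hi : i ∉ B) (hbelow : ∃ b ∈ B, b < i)
    (habove : ∃ a ∈ B, i < a) : ∃ a b, IsGapAround B i a b := by
  obtain ⟨b₀, hb₀, hb₀i⟩ := hbelow
  obtain ⟨a₀, ha₀, hia₀⟩ := habove
  have hA : (B.filter (i < ·)).Nonempty := ⟨a₀, Finset.mem_filter.mpr ⟨ha₀, hia₀⟩⟩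
  have hB : (B.filter (· < i)).Nonempty := ⟨b₀, Finset.mem_filter.mpr ⟨hb₀, hb₀i⟩⟩
  obtain ⟨ha, hia⟩ := Finset.mem_filter.mp ((B.filter (i < ·)).min'_mem hA)
  obtain ⟨hb, hbi⟩ := Finset.mem_filter.mp ((B.filter (· < i)).max'_mem hB)
  refine ⟨_, _, ha, hb, hbi, hia, fun c hc ⟨hbc, hca⟩ => ?_⟩
  rcases lt_trichotomy c i with hci | rfl | hic
  · exact (Finset.le_max' _ c (Finset.mem_filter.mpr ⟨hc, hci⟩)).not_gt hbc
  · exact hi hc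
  · exact (Finset.min'_le _ c (Finset.mem_filter.mpr ⟨hc, hic⟩)).not_gt hca

end GapAround

theorem notMem_getElem_of_ne {α : Type*} {π : List (Finset α)} (hd : π.Pairwise Disjoint)
    {t j : ℕ} (ht : t < π.length) (hj : j < π.length) (htj : t ≠ j) {x : α}
    (hx : x ∈ π[t]) : x ∉ π[j] := by
  rcases htj.lt_or_gt with h | h
  · exact Finset.disjoint_left.mp (List.pairwise_iff_getElem.mp hd t j ht hj h) hx
  · exact Finset.disjoint_right.mp (List.pairwise_iff_getElem.mp hd j t hj ht h) hx

theorem sum_card_straddling_eq_ncard_gaps (n : ℕ) (π : List (Finset ℕ))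
    (hd : π.Pairwise Disjoint) (hcover : ∀ B ∈ π, B ⊆ Finset.Icc 1 n)
    (c : ℕ → ℕ → Prop) [DecidableRel c] (hc : ∀ t j, c t j → t ≠ j) :
    ∑ i ∈ Finset.Icc 1 n, ((Finset.range π.length).filter fun j =>
      ∃ hj : j < π.length, (∃ t, ∃ ht : t < π.length, c t j ∧ i ∈ π[t]'ht)
        ∧ (∃ b ∈ π[j]'hj, b < i) ∧ (∃ b ∈ π[j]'hj, i < b)).card
    = {q : ℕ × ℕ × ℕ × ℕ | ∃ hj : q.2.1 < π.length,
        (∃ t, ∃ ht : t < π.length, c t q.2.1 ∧ q.1 ∈ π[t]'ht)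
          ∧ IsGapAround (π[q.2.1]'hj) q.1 q.2.2.1 q.2.2.2}.ncard := by
  set Q := {q : ℕ × ℕ × ℕ × ℕ | ∃ hj : q.2.1 < π.length,
    (∃ t, ∃ ht : t < π.length, c t q.2.1 ∧ q.1 ∈ π[t]'ht)
      ∧ IsGapAround (π[q.2.1]'hj) q.1 q.2.2.1 q.2.2.2}
  let pos : ℕ × ℕ × ℕ × ℕ → Σ _ : ℕ, ℕ := fun q => ⟨q.1, q.2.1⟩
  have hinj : Set.InjOn pos Q := by
    rintro ⟨i, j, a, b⟩ ⟨_, -, hgap⟩ ⟨i', j', a', b'⟩ ⟨_, -, hgap'⟩ hpos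
    obtain ⟨rfl, rfl⟩ : i = i' ∧ j = j' := by simpa [pos] using hpos
    obtain ⟨rfl, rfl⟩ := hgap.unique hgap'
    rfl
  have himage : pos '' Q = ↑((Finset.Icc 1 n).sigma fun i => (Finset.range π.length).filter
      fun j => ∃ hj : j < π.length, (∃ t, ∃ ht : t < π.length, c t j ∧ i ∈ π[t]'ht)
        ∧ (∃ b ∈ π[j]'hj, b < i) ∧ (∃ b ∈ π[j]'hj, i < b)) := by
    ext ⟨i, j⟩
    simp only [Set.mem_image, Finset.coe_sigma, Set.mem_sigma_iff, Finset.mem_coe,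
      Finset.mem_filter, Finset.mem_range]
    constructor
    · rintro ⟨⟨i, j, a, b⟩, ⟨hj, ⟨t, ht, hct, hit⟩, ha, hb, hbi, hia, -⟩, hpos⟩
      obtain ⟨rfl, rfl⟩ : i = _ ∧ j = _ := by simpa [pos] using hpos
      exact ⟨hcover _ (List.getElem_mem ht) hit, hj, hj, ⟨t, ht, hct, hit⟩,
        ⟨b, hb, hbi⟩, ⟨a, ha, hia⟩⟩
    · rintro ⟨-, -, hj, ⟨t, ht, hct, hit⟩, hbelow, habove⟩
      obtain ⟨a, b, hgap⟩ := exists_isGapAround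
        (notMem_getElem_of_ne hd ht hj (hc t j hct) hit) hbelow habove
      exact ⟨(i, j, a, b), ⟨hj, ⟨t, ht, hct, hit⟩, hgap⟩, rfl⟩
  rw [← hinj.ncard_image, himage, Set.ncard_coe_finset, Finset.card_sigma]

end OSP

/-- For any ordered set partition `π`, `rsb π` is the number of occurrences of
the dashed pattern `2-31` in `π`, and `lsb π` is the number of occurrences of
`31-2` in `π`. -/
theorem stmt_18 (n k : ℕ) (π : List (Finset ℕ)) (h : OSP.isOP n k π) :
    OSP.rsb n π = OSP.occ2d31 π ∧ OSP.lsb n π = OSP.occ31d2 π := by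
  obtain ⟨-, -, hd, hmem⟩ := h
  have hcover : ∀ B ∈ π, B ⊆ Finset.Icc 1 n := fun B hB x hx => (hmem x).mp ⟨B, hB, hx⟩
  exact ⟨OSP.sum_card_straddling_eq_ncard_gaps n π hd hcover (· < ·) fun _ _ => ne_of_lt,
    OSP.sum_card_straddling_eq_ncard_gaps n π hd hcover (· > ·) fun _ _ => ne_of_gt⟩
end

section
/- For any permutation σ of {1, …, n} with descending runs D₁, …, D_k (listed left to right), the major index of σ satisfies maj(σ) = MIL(D₁|D₂|⋯|D_k) + C(n+1, 2) − k·n, where MIL(B₁|⋯|B_k) = Σ_{j=2}^{k} (j−1)|B_j|. -/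
/-- The descending runs of a word: its maximal contiguous strictly decreasing
factors, listed from left to right. -/
def descRuns : List ℕ → List (List ℕ)
  | [] => []
  | [a] => [[a]]
  | a :: b :: l =>
    if b < a then
      match descRuns (b :: l) with
      | [] => [[a]]
      | r :: rs => (a :: r) :: rs
    else [a] :: descRuns (b :: l)

open Classical in
/-- The major index of a word: the sum of its descent positions `i`
(`1 ≤ i ≤ n-1`, 1-based, with `x_i > x_{i+1}`). -/
noncomputable def maj (w : List ℕ) : ℕ :=
  ∑ i ∈ (Finset.range w.length).filter
    (fun i => ∃ h : i < w.length, 0 < i ∧ w[i]'h < w[i - 1]'(by omega)), i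

/-- Milne's statistic of a sequence of blocks `B₁ | B₂ | ⋯ | B_k`:
`|B₂| + 2|B₃| + ⋯ + (k-1)|B_k|`. -/
def MIL (bs : List (List ℕ)) : ℕ :=
  ∑ j ∈ Finset.range bs.length, j * (bs.getD j []).length

open Classical in
noncomputable def des (w : List ℕ) : ℕ :=
  ∑ i ∈ (Finset.range w.length).filter
    (fun i => ∃ h : i < w.length, 0 < i ∧ w[i]'h < w[i - 1]'(by omega)), 1

open Classical in
lemma maj_eq (w : List ℕ) : maj w =
    ∑ i ∈ Finset.range w.length,
      if (∃ h : i < w.length, 0 < i ∧ w[i]'h < w[i - 1]'(by omega)) then i else 0 := by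
  rw [maj, Finset.sum_filter]

open Classical in
lemma des_eq (w : List ℕ) : des w =
    ∑ i ∈ Finset.range w.length,
      if (∃ h : i < w.length, 0 < i ∧ w[i]'h < w[i - 1]'(by omega)) then 1 else 0 := by
  rw [des, Finset.sum_filter]

lemma maj_nil : maj [] = 0 := by rw [maj_eq]; simp

lemma des_nil : des [] = 0 := by rw [des_eq]; simp

lemma maj_singleton (a : ℕ) : maj [a] = 0 := by
  rw [maj_eq]; simp

lemma des_singleton (a : ℕ) : des [a] = 0 := by
  rw [des_eq]; simp

open Classical in
lemma maj_cons (a b : ℕ) (l : List ℕ) :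
    maj (a :: b :: l) = maj (b :: l) + des (b :: l) + (if b < a then 1 else 0) := by
  rw [maj_eq, maj_eq, des_eq]
  simp only [List.length_cons]
  rw [Finset.sum_range_succ' _ (l.length + 1), Finset.sum_range_succ' _ l.length,
    Finset.sum_range_succ' _ l.length, Finset.sum_range_succ' _ l.length]
  have e1 : ∀ k ∈ Finset.range l.length,
      (if (∃ h : k + 1 + 1 < l.length + 1 + 1, 0 < k + 1 + 1 ∧
          (a :: b :: l)[k + 1 + 1]'h < (a :: b :: l)[k + 1 + 1 - 1]'(by simp only [List.length_cons] at *; omega)) then k + 1 + 1 else 0)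
      = (if (∃ h : k + 1 < l.length + 1, 0 < k + 1 ∧
          (b :: l)[k + 1]'h < (b :: l)[k + 1 - 1]'(by simp only [List.length_cons] at *; omega)) then k + 1 else 0)
        + (if (∃ h : k + 1 < l.length + 1, 0 < k + 1 ∧
          (b :: l)[k + 1]'h < (b :: l)[k + 1 - 1]'(by simp only [List.length_cons] at *; omega)) then 1 else 0) := by
    intro k hk
    rw [Finset.mem_range] at hk
    have hiff : (∃ h : k + 1 + 1 < l.length + 1 + 1, 0 < k + 1 + 1 ∧
          (a :: b :: l)[k + 1 + 1]'h < (a :: b :: l)[k + 1 + 1 - 1]'(by simp only [List.length_cons] at *; omega)) ↔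
        (∃ h : k + 1 < l.length + 1, 0 < k + 1 ∧
          (b :: l)[k + 1]'h < (b :: l)[k + 1 - 1]'(by simp only [List.length_cons] at *; omega)) := by
      constructor
      · rintro ⟨h, -, hlt⟩
        refine ⟨by omega, by omega, ?_⟩
        simpa using hlt
      · rintro ⟨h, -, hlt⟩
        refine ⟨by omega, by omega, ?_⟩
        simpa using hlt
    rw [if_congr hiff rfl rfl]
    split_ifs <;> omega
  rw [Finset.sum_congr rfl e1, Finset.sum_add_distrib]
  have h0 : ¬ (∃ h : 0 < l.length + 1 + 1, 0 < 0 ∧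
      (a :: b :: l)[0]'h < (a :: b :: l)[0 - 1]'(by simp only [List.length_cons] at *; omega)) := by
    rintro ⟨-, h, -⟩; omega
  have h0' : ¬ (∃ h : (0:ℕ) < l.length + 1, 0 < 0 ∧
      (b :: l)[0]'h < (b :: l)[0 - 1]'(by simp only [List.length_cons] at *; omega)) := by
    rintro ⟨-, h, -⟩; omega
  have h1 : (∃ h : 0 + 1 < l.length + 1 + 1, 0 < 0 + 1 ∧
      (a :: b :: l)[0 + 1]'h < (a :: b :: l)[0 + 1 - 1]'(by simp only [List.length_cons] at *; omega)) ↔ b < a := by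
    constructor
    · rintro ⟨h, -, hlt⟩; simpa using hlt
    · intro hba; exact ⟨by omega, by omega, by simpa using hba⟩
  rw [if_neg h0, if_neg h0', if_neg h0', if_congr h1 rfl rfl]
  ring

open Classical in
lemma des_cons (a b : ℕ) (l : List ℕ) :
    des (a :: b :: l) = des (b :: l) + (if b < a then 1 else 0) := by
  rw [des_eq, des_eq]
  simp only [List.length_cons]
  rw [Finset.sum_range_succ' _ (l.length + 1), Finset.sum_range_succ' _ l.length,
    Finset.sum_range_succ' _ l.length]
  have e1 : ∀ k ∈ Finset.range l.length,
      (if (∃ h : k + 1 + 1 < l.length + 1 + 1, 0 < k + 1 + 1 ∧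
          (a :: b :: l)[k + 1 + 1]'h < (a :: b :: l)[k + 1 + 1 - 1]'(by simp only [List.length_cons] at *; omega)) then 1 else 0)
      = (if (∃ h : k + 1 < l.length + 1, 0 < k + 1 ∧
          (b :: l)[k + 1]'h < (b :: l)[k + 1 - 1]'(by simp only [List.length_cons] at *; omega)) then 1 else 0) := by
    intro k hk
    rw [Finset.mem_range] at hk
    have hiff : (∃ h : k + 1 + 1 < l.length + 1 + 1, 0 < k + 1 + 1 ∧
          (a :: b :: l)[k + 1 + 1]'h < (a :: b :: l)[k + 1 + 1 - 1]'(by simp only [List.length_cons] at *; omega)) ↔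
        (∃ h : k + 1 < l.length + 1, 0 < k + 1 ∧
          (b :: l)[k + 1]'h < (b :: l)[k + 1 - 1]'(by simp only [List.length_cons] at *; omega)) := by
      constructor
      · rintro ⟨h, -, hlt⟩
        refine ⟨by omega, by omega, ?_⟩
        simpa using hlt
      · rintro ⟨h, -, hlt⟩
        refine ⟨by omega, by omega, ?_⟩
        simpa using hlt
    rw [if_congr hiff rfl rfl]
  rw [Finset.sum_congr rfl e1]
  have h0 : ¬ (∃ h : 0 < l.length + 1 + 1, 0 < 0 ∧
      (a :: b :: l)[0]'h < (a :: b :: l)[0 - 1]'(by simp only [List.length_cons] at *; omega)) := by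
    rintro ⟨-, h, -⟩; omega
  have h0' : ¬ (∃ h : (0:ℕ) < l.length + 1, 0 < 0 ∧
      (b :: l)[0]'h < (b :: l)[0 - 1]'(by simp only [List.length_cons] at *; omega)) := by
    rintro ⟨-, h, -⟩; omega
  have h1 : (∃ h : 0 + 1 < l.length + 1 + 1, 0 < 0 + 1 ∧
      (a :: b :: l)[0 + 1]'h < (a :: b :: l)[0 + 1 - 1]'(by simp only [List.length_cons] at *; omega)) ↔ b < a := by
    constructor
    · rintro ⟨h, -, hlt⟩; simpa using hlt
    · intro hba; exact ⟨by omega, by omega, by simpa using hba⟩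
  rw [if_neg h0, if_neg h0', if_congr h1 rfl rfl]
  ring

lemma descRuns_ne_nil (a : ℕ) (l : List ℕ) : descRuns (a :: l) ≠ [] := by
  match l with
  | [] => simp [descRuns]
  | b :: l =>
    rw [descRuns]
    split_ifs
    · rcases h' : descRuns (b :: l) with _ | ⟨r, rs⟩ <;> simp
    · simp

lemma descRuns_cons_lt {a b : ℕ} {l : List ℕ} {r : List ℕ} {rs : List (List ℕ)}
    (hba : b < a) (hr : descRuns (b :: l) = r :: rs) :
    descRuns (a :: b :: l) = (a :: r) :: rs := by
  rw [descRuns, if_pos hba, hr]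

lemma descRuns_cons_ge {a b : ℕ} {l : List ℕ} (hba : ¬ b < a) :
    descRuns (a :: b :: l) = [a] :: descRuns (b :: l) := by
  rw [descRuns, if_neg hba]

lemma sum_lengths : ∀ w : List ℕ, ((descRuns w).map List.length).sum = w.length := by
  intro w
  induction w with
  | nil => simp [descRuns]
  | cons a t ih =>
    cases t with
    | nil => simp [descRuns]
    | cons b l =>
      by_cases hba : b < a
      · obtain ⟨r, rs, hr⟩ := List.exists_cons_of_ne_nil (descRuns_ne_nil b l)
        rw [descRuns_cons_lt hba hr]
        rw [hr] at ih
        simp at ih ⊢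
        omega
      · rw [descRuns_cons_ge hba]
        simp at ih ⊢
        omega

lemma des_add_runs : ∀ (l : List ℕ) (a : ℕ),
    des (a :: l) + (descRuns (a :: l)).length = l.length + 1 := by
  intro l
  induction l with
  | nil => intro a; simp [descRuns, des_singleton]
  | cons b l ih =>
    intro a
    have ihb := ih b
    rw [des_cons]
    by_cases hba : b < a
    · obtain ⟨r, rs, hr⟩ := List.exists_cons_of_ne_nil (descRuns_ne_nil b l)
      rw [descRuns_cons_lt hba hr]
      rw [hr] at ihb
      simp [hba] at ihb ⊢
      omega
    · rw [descRuns_cons_ge hba]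
      simp [hba] at ihb ⊢
      omega

lemma getD_sum (bs : List (List ℕ)) :
    ∑ j ∈ Finset.range bs.length, (bs.getD j []).length = (bs.map List.length).sum := by
  induction bs with
  | nil => simp
  | cons c cs ih =>
    rw [List.length_cons, Finset.sum_range_succ']
    simp only [List.getD_cons_succ, List.getD_cons_zero, List.map_cons, List.sum_cons]
    omega

lemma MIL_cons (c : List ℕ) (cs : List (List ℕ)) :
    MIL (c :: cs) = MIL cs + (cs.map List.length).sum := by
  rw [MIL, MIL, List.length_cons, Finset.sum_range_succ']
  simp only [List.getD_cons_succ, List.getD_cons_zero, Nat.zero_mul, Nat.add_zero]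
  rw [← getD_sum]
  rw [← Finset.sum_add_distrib]
  apply Finset.sum_congr rfl
  intro j hj
  ring

lemma choose_step (m : ℕ) : (m + 2).choose 2 = (m + 1).choose 2 + (m + 1) := by
  rw [Nat.choose_succ_succ (m + 1) 1, Nat.choose_one_right]
  show (m + 1) + (m + 1).choose 2 = (m + 1).choose 2 + (m + 1)
  omega

lemma key : ∀ w : List ℕ, (maj w : ℤ) = MIL (descRuns w) + (w.length + 1).choose 2
    - (descRuns w).length * w.length := by
  intro w
  induction w with
  | nil => simp [maj_nil, descRuns, MIL]
  | cons a t ih =>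
    cases t with
    | nil =>
      simp [maj_singleton, descRuns, MIL]
    | cons b l =>
      have hm := maj_cons a b l
      have hd := des_add_runs l b
      have hc : (l.length + 1 + 1 + 1).choose 2
          = (l.length + 1 + 1).choose 2 + (l.length + 1 + 1) := choose_step (l.length + 1)
      by_cases hba : b < a
      · obtain ⟨r, rs, hr⟩ := List.exists_cons_of_ne_nil (descRuns_ne_nil b l)
        rw [descRuns_cons_lt hba hr]
        rw [hr] at ih hd
        have hM : MIL ((a :: r) :: rs) = MIL (r :: rs) := by
          rw [MIL_cons, MIL_cons]
        rw [hM, hm, if_pos hba]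
        have hd' : (des (b :: l) : ℤ) + (rs.length + 1) = l.length + 1 := by
          simp only [List.length_cons] at hd
          exact_mod_cast hd
        simp only [List.length_cons] at ih ⊢
        push_cast [hc] at ih ⊢
        linear_combination ih + hd'
      · rw [descRuns_cons_ge hba, MIL_cons, hm, if_neg hba]
        have hsum : (((descRuns (b :: l)).map List.length).sum : ℤ) = l.length + 1 := by
          have h2 := sum_lengths (b :: l)
          simp only [List.length_cons] at h2
          exact_mod_cast h2
        have hd' : (des (b :: l) : ℤ) + (descRuns (b :: l)).length = l.length + 1 := by
          exact_mod_cast hd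
        simp only [List.length_cons] at ih ⊢
        push_cast [hc, -Nat.cast_list_sum] at ih ⊢
        linear_combination ih + hd' - hsum

/-- For a permutation `σ` of `{1, …, n}` with `k` descending runs
`D₁, …, D_k`, one has `maj σ = MIL (D₁|⋯|D_k) + C(n+1, 2) − k n`. -/
theorem stmt_19 (n : ℕ) (w : List ℕ) (h : w.Perm (List.range' 1 n)) :
    (maj w : ℤ) = MIL (descRuns w) + (n + 1).choose 2
      - (descRuns w).length * n := by
  have hn : w.length = n := by simpa using h.length_eq
  subst hn
  exact key w
end
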